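/- arXiv:1403.1512 — 6 statements merged into one kernel-verified Lean document; each statement's English description precedes it below -/
import Mathlib

section
/- Let G = (V, E ∪ A) be a strongly connected simple mixed graph with weight function w : E ∪ A → ℕ and k = |A|. Let D be a multi-orientation of G that is Eulerian, has minimum weight among all Eulerian multi-orientations of G, and, subject to that, has the minimum total number of arcs Σ_{u,v} μ_D(u,v). Then Σ_{(u,v) ∈ A} μ_D(u,v) ≤ k²/2 + 2k (equivalently, 2·Σ_{(u,v) ∈ A} μ_D(u,v) ≤ k² + 4k). -/
/-!
Statement 0: Let `G = (V, E ∪ A)` be a strongly connected simple mixed graph with weight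
function `w : E ∪ A → ℕ` and `k = |A|`.  Let `D` be a multi-orientation of `G` that is
Eulerian, has minimum weight among all Eulerian multi-orientations of `G`, and, subject to
that, has the minimum total number of arcs.  Then `2 · Σ_{(u,v) ∈ A} μ_D(u,v) ≤ k² + 4k`.
-/

namespace Stmt0

/-- A simple mixed graph on `V`: a set of (undirected) edges `E` (stored as a symmetric set
of ordered pairs) and a set of arcs `A`, with at most one edge or arc (not both) between any
pair of distinct vertices, and no loops. -/
structure MixedGraph (V : Type*) where
  E : Finset (V × V)
  A : Finset (V × V)
  E_symm : ∀ u v : V, (u, v) ∈ E → (v, u) ∈ E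
  E_irrefl : ∀ v : V, (v, v) ∉ E
  A_irrefl : ∀ v : V, (v, v) ∉ A
  simple_EA : ∀ u v : V, (u, v) ∈ E → (u, v) ∉ A ∧ (v, u) ∉ A
  simple_A : ∀ u v : V, (u, v) ∈ A → (v, u) ∉ A

variable {V : Type*} [Fintype V] [DecidableEq V]

/-- Out-degree of `v` in the directed multigraph with multiplicity function `μ`. -/
def outDeg (μ : V → V → ℕ) (v : V) : ℕ := ∑ u, μ v u

/-- In-degree of `v` in the directed multigraph with multiplicity function `μ`. -/
def inDeg (μ : V → V → ℕ) (v : V) : ℕ := ∑ u, μ u v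

/-- A directed multigraph is balanced if `d⁺(v) = d⁻(v)` for every vertex `v`. -/
def Balanced (μ : V → V → ℕ) : Prop := ∀ v, outDeg μ v = inDeg μ v

/-- The undirected multigraph obtained from `μ` by forgetting directions is connected. -/
def UConnected (μ : V → V → ℕ) : Prop :=
  ∀ x y : V, Relation.ReflTransGen (fun a b => 0 < μ a b + μ b a) x y

/-- An Eulerian directed multigraph: balanced, with connected undirected version. -/
def Eulerian (μ : V → V → ℕ) : Prop := Balanced μ ∧ UConnected μ

/-- `μ` is a multi-orientation of the mixed graph `G`: every arc of `G` gets at least one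
copy (and no copies of its reverse), every edge of `G` is replaced by at least one copy of
one of its two orientations, and nothing else appears. -/
def IsMultiOrientation (G : MixedGraph V) (μ : V → V → ℕ) : Prop :=
  (∀ u v : V, (u, v) ∈ G.A → 1 ≤ μ u v ∧ μ v u = 0) ∧
  (∀ u v : V, (u, v) ∈ G.E → 1 ≤ μ u v + μ v u) ∧
  (∀ u v : V, (u, v) ∉ G.E → (u, v) ∉ G.A → (v, u) ∉ G.A → μ u v = 0)

/-- `G` is strongly connected: every ordered pair of vertices is joined by a path that
traverses edges in either direction and arcs in their direction. -/
def StronglyConnected (G : MixedGraph V) : Prop :=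
  ∀ x y : V, Relation.ReflTransGen (fun a b => (a, b) ∈ G.E ∨ (a, b) ∈ G.A) x y

/-- The weight of a directed multigraph `μ` with respect to weights `w`. -/
def weight (w : V → V → ℕ) (μ : V → V → ℕ) : ℕ := ∑ u, ∑ v, μ u v * w u v

/-- Total number of arcs of a directed multigraph. -/
def totalArcs (μ : V → V → ℕ) : ℕ := ∑ u, ∑ v, μ u v

set_option maxHeartbeats 1000000
set_option linter.unusedSectionVars false

/-! ### Auxiliary machinery -/


/-- Update a two-argument function at a single pair. -/
def upd (ν : V → V → ℕ) (a b : V) (n : ℕ) : V → V → ℕ :=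
  Function.update ν a (Function.update (ν a) b n)

lemma upd_apply (ν : V → V → ℕ) (a b : V) (n : ℕ) (p q : V) :
    upd ν a b n p q = if p = a ∧ q = b then n else ν p q := by
  unfold upd
  rcases eq_or_ne p a with rfl | hp
  · rw [Function.update_self, Function.update_apply]
    simp
  · rw [Function.update_of_ne hp]
    simp [hp]

lemma sum_shift {f g : V → ℕ} {c d : ℕ} (b : V)
    (hpt : ∀ q, f q + (if q = b then c else 0) = g q + (if q = b then d else 0)) :
    (∑ q, f q) + c = (∑ q, g q) + d := by
  have h := Finset.sum_congr rfl (fun q (_ : q ∈ Finset.univ) => hpt q)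
  rw [Finset.sum_add_distrib, Finset.sum_add_distrib,
    Finset.sum_ite_eq' Finset.univ b (fun _ => c),
    Finset.sum_ite_eq' Finset.univ b (fun _ => d)] at h
  simpa using h

lemma outDeg_upd (ν : V → V → ℕ) (a b : V) (n : ℕ) (x : V) :
    outDeg (upd ν a b n) x + (if x = a then ν a b else 0)
      = outDeg ν x + (if x = a then n else 0) := by
  rcases eq_or_ne x a with rfl | hx
  · simp only [if_pos rfl]
    apply sum_shift b
    intro q
    rw [upd_apply]
    rcases eq_or_ne q b with rfl | hq
    · simp [Nat.add_comm]
    · simp [hq]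
  · simp only [if_neg hx]
    have : outDeg (upd ν a b n) x = outDeg ν x := by
      unfold outDeg
      apply Finset.sum_congr rfl
      intro q _
      rw [upd_apply]
      simp [hx]
    omega

lemma inDeg_upd (ν : V → V → ℕ) (a b : V) (n : ℕ) (x : V) :
    inDeg (upd ν a b n) x + (if x = b then ν a b else 0)
      = inDeg ν x + (if x = b then n else 0) := by
  rcases eq_or_ne x b with rfl | hx
  · simp only [if_pos rfl]
    apply sum_shift a
    intro p
    rw [upd_apply]
    rcases eq_or_ne p a with rfl | hp
    · simp [Nat.add_comm]
    · simp [hp]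
  · simp only [if_neg hx]
    have : inDeg (upd ν a b n) x = inDeg ν x := by
      unfold inDeg
      apply Finset.sum_congr rfl
      intro p _
      rw [upd_apply]
      simp [hx]
    omega

lemma weight_upd (w ν : V → V → ℕ) (a b : V) (n : ℕ) :
    weight w (upd ν a b n) + ν a b * w a b = weight w ν + n * w a b := by
  unfold weight
  apply sum_shift a
  intro p
  rcases eq_or_ne p a with rfl | hp
  · simp only [if_pos rfl]
    apply sum_shift b
    intro q
    rw [upd_apply]
    rcases eq_or_ne q b with rfl | hq
    · simp [Nat.add_comm]
    · simp [hq]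
  · simp only [if_neg hp]
    have : (∑ v, upd ν a b n p v * w p v) = ∑ v, ν p v * w p v := by
      apply Finset.sum_congr rfl
      intro q _
      rw [upd_apply]
      simp [hp]
    omega

lemma totalArcs_upd (ν : V → V → ℕ) (a b : V) (n : ℕ) :
    totalArcs (upd ν a b n) + ν a b = totalArcs ν + n := by
  unfold totalArcs
  apply sum_shift a
  intro p
  rcases eq_or_ne p a with rfl | hp
  · simp only [if_pos rfl]
    apply sum_shift b
    intro q
    rw [upd_apply]
    rcases eq_or_ne q b with rfl | hq
    · simp [Nat.add_comm]
    · simp [hq]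
  · simp only [if_neg hp]
    have : (∑ v, upd ν a b n p v) = ∑ v, ν p v := by
      apply Finset.sum_congr rfl
      intro q _
      rw [upd_apply]
      simp [hp]
    omega




lemma getLast?_append_cons {α : Type*} (m : List α) (a : α) (l : List α) :
    (m ++ a :: l).getLast? = (a :: l).getLast? := by
  rw [List.getLast?_append, List.getLast?_eq_getLast (l := a :: l) (by simp)]
  simp

lemma nodup_chain_aux {α : Type*} (r : α → α → Prop) (b : α) :
    ∀ (n : ℕ) (a : α) (l : List α), l.length ≤ n → List.Chain r a l →
      (a :: l).getLast? = some b →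
      ∃ l', List.Chain r a l' ∧ (a :: l').Nodup ∧ (a :: l').getLast? = some b := by
  intro n
  induction n with
  | zero =>
    intro a l hlen hc hlast
    have hl : l = [] := List.length_eq_zero_iff.1 (Nat.le_zero.1 hlen)
    subst hl
    exact ⟨[], List.Chain.nil, by simp, hlast⟩
  | succ n ih =>
    intro a l hlen hc hlast
    by_cases hnd : (a :: l).Nodup
    · exact ⟨l, hc, hnd, hlast⟩
    · obtain ⟨x, hdup⟩ := List.exists_duplicate_iff_not_nodup.2 hnd
      rw [List.duplicate_iff_sublist] at hdup
      obtain ⟨r₁, r₂, heq, hx1, hx2⟩ := List.cons_sublist_iff.1 hdup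
      have hx2' : x ∈ r₂ := hx2.subset (List.mem_singleton_self x)
      obtain ⟨s₁, t₁, rfl⟩ := List.append_of_mem hx1
      obtain ⟨s₂, t₂, rfl⟩ := List.append_of_mem hx2'
      have heq' : a :: l = s₁ ++ x :: ((t₁ ++ s₂) ++ x :: t₂) := by
        rw [heq]; simp
      set m := t₁ ++ s₂ with hm
      cases s₁ with
      | nil =>
        simp only [List.nil_append] at heq'
        rw [List.cons_eq_cons] at heq'
        obtain ⟨rfl, rfl⟩ := heq'
        have hc2 : List.Chain r a t₂ := (List.isChain_cons_split.1 hc).2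
        have hlen2 : t₂.length ≤ n := by
          simp [List.length_append] at hlen
          omega
        have hlast2 : (a :: t₂).getLast? = some b := by
          have : a :: (m ++ a :: t₂) = (a :: m) ++ (a :: t₂) := by simp
          rw [this, getLast?_append_cons] at hlast
          exact hlast
        exact ih a t₂ hlen2 hc2 hlast2
      | cons c s₁' =>
        rw [List.cons_append, List.cons_eq_cons] at heq'
        obtain ⟨rfl, rfl⟩ := heq'
        have hc1 : List.Chain r a (s₁' ++ [x]) ∧ List.Chain r x (m ++ x :: t₂) :=
          List.isChain_cons_split.1 hc
        have hc2 : List.Chain r x t₂ := (List.isChain_cons_split.1 hc1.2).2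
        have hc3 : List.Chain r a (s₁' ++ x :: t₂) := List.isChain_cons_split.2 ⟨hc1.1, hc2⟩
        have hlen2 : (s₁' ++ x :: t₂).length ≤ n := by
          simp [List.length_append] at hlen ⊢
          omega
        have hlast2 : (a :: (s₁' ++ x :: t₂)).getLast? = some b := by
          have e1 : a :: (s₁' ++ x :: (m ++ x :: t₂)) = (a :: s₁' ++ x :: m) ++ (x :: t₂) := by
            simp
          rw [e1, getLast?_append_cons] at hlast
          have e2 : a :: (s₁' ++ x :: t₂) = (a :: s₁') ++ (x :: t₂) := by simp
          rw [e2, getLast?_append_cons]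
          exact hlast
        exact ih a (s₁' ++ x :: t₂) hlen2 hc3 hlast2

lemma exists_nodup_chain {α : Type*} {r : α → α → Prop} {a b : α}
    (h : Relation.ReflTransGen r a b) :
    ∃ l, List.Chain r a l ∧ (a :: l).Nodup ∧ (a :: l).getLast? = some b := by
  obtain ⟨l, hc, hl⟩ := List.exists_isChain_cons_of_relationReflTransGen h
  exact nodup_chain_aux r b l.length a l le_rfl hc
    (by rw [List.getLast?_eq_getLast (l := a :: l) (by simp), hl])

/-- The relaxed step relation: a support position that is not a light `A`-arc. -/
def Step (G : MixedGraph V) (μ : V → V → ℕ) (x y : V) : Prop :=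
  0 < μ x y ∧ ((x, y) ∈ G.A → 3 ≤ μ x y)

lemma not_mem_zip_of_getLast {u : V} :
    ∀ (l : List V) (z : V), (z :: l).Nodup → (z :: l).getLast? = some u →
      ∀ c : V, (u, c) ∉ (z :: l).zip l := by
  intro l
  induction l with
  | nil => intro z _ _ c; simp
  | cons y l' ih =>
    intro z hnd hlast c hmem
    have hlast' : (y :: l').getLast? = some u := by
      have e : (z :: y :: l') = [z] ++ (y :: l') := rfl
      rw [e, getLast?_append_cons] at hlast
      exact hlast
    rw [List.zip_cons_cons, List.mem_cons] at hmem
    rcases hmem with h | h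
    · have hz : z = u := (congrArg Prod.fst h).symm
      have hu : u ∈ y :: l' := by
        have h1 := List.getLast?_eq_getLast (l := y :: l') (by simp)
        rw [hlast'] at h1
        rw [Option.some.inj h1]
        exact List.getLast_mem _
      exact (List.nodup_cons.1 hnd).1 (hz ▸ hu)
    · exact ih y hnd.of_cons hlast' c h

lemma build (G : MixedGraph V) (w μ : V → V → ℕ)
    (hw : ∀ p q : V, (p, q) ∈ G.E → w p q = w q p)
    (hmoμ : IsMultiOrientation G μ) (u : V) :
    ∀ (l : List V) (z : V) (ν : V → V → ℕ),
      List.Chain (Step G μ) z l →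
      (z :: l).Nodup →
      (z :: l).getLast? = some u →
      (∀ p q : V, (p, q) ∈ (z :: l).zip l → ν p q = μ p q) →
      (∀ x, outDeg ν x + (if x = u then 2 else 0) = inDeg ν x + (if x = z then 2 else 0)) →
      (∀ p q, (p, q) ∈ G.A → 1 ≤ ν p q ∧ ν q p = 0) →
      (∀ p q, (p, q) ∈ G.E → 1 ≤ ν p q + ν q p) →
      (∀ p q, (p, q) ∉ G.E → (p, q) ∉ G.A → (q, p) ∉ G.A → ν p q = 0) →
      (∀ p q, 0 < μ p q + μ q p → 0 < ν p q + ν q p) →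
      weight w ν ≤ weight w μ →
      totalArcs ν + 2 ≤ totalArcs μ →
      ∃ ν', IsMultiOrientation G ν' ∧ Balanced ν' ∧
        (∀ p q, 0 < μ p q + μ q p → 0 < ν' p q + ν' q p) ∧
        weight w ν' ≤ weight w μ ∧ totalArcs ν' + 2 ≤ totalArcs μ := by
  intro l
  induction l with
  | nil =>
    intro z ν _ _ hlast hU hbal harc hedge hzero hsupp hwt harcs
    have hz : z = u := by simpa using hlast
    subst hz
    refine ⟨ν, ⟨harc, hedge, hzero⟩, ?_, hsupp, hwt, harcs⟩
    intro x
    have h := hbal x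
    split_ifs at h <;> omega
  | cons y l' ih =>
    intro z ν hc hnd hlast hU hbal harc hedge hzero hsupp hwt harcs
    rw [List.Chain, List.chain_cons] at hc
    obtain ⟨⟨hpos, hA3⟩, hc'⟩ := hc
    have hνzy : ν z y = μ z y := hU z y (by rw [List.zip_cons_cons]; exact List.mem_cons_self)
    have hzny : z ∉ y :: l' := (List.nodup_cons.1 hnd).1
    have hzy_ne : z ≠ y := fun h => hzny (h ▸ List.mem_cons_self)
    have hnd' : (y :: l').Nodup := hnd.of_cons
    have hlast' : (y :: l').getLast? = some u := by
      have e : (z :: y :: l') = [z] ++ (y :: l') := rfl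
      rw [e, getLast?_append_cons] at hlast
      exact hlast
    by_cases hA : (z, y) ∈ G.A
    · -- A-step : remove two copies of the heavy arc (z,y)
      have h3 : 3 ≤ ν z y := by rw [hνzy]; exact hA3 hA
      set ν₁ := upd ν z y (ν z y - 2) with hν₁
      have happ : ∀ p q, ν₁ p q = if p = z ∧ q = y then ν z y - 2 else ν p q := by
        intro p q; rw [hν₁]; exact upd_apply ν z y (ν z y - 2) p q
      have hyzA : (y, z) ∉ G.A := G.simple_A z y hA
      have hzyE : (z, y) ∉ G.E := fun h => (G.simple_EA z y h).1 hA
      have hyzE : (y, z) ∉ G.E := fun h => (G.simple_EA y z h).2 hA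
      refine ih y ν₁ hc' hnd' hlast' ?_ ?_ ?_ ?_ ?_ ?_ ?_ ?_
      · intro p q hm
        have hpq := List.of_mem_zip hm
        have hpz : p ≠ z := fun h => hzny (h ▸ hpq.1)
        rw [happ, if_neg (by tauto)]
        exact hU p q (by rw [List.zip_cons_cons]; exact List.mem_cons_of_mem _ hm)
      · intro x
        have ho := outDeg_upd ν z y (ν z y - 2) x
        have hi := inDeg_upd ν z y (ν z y - 2) x
        rw [← hν₁] at ho hi
        have hb := hbal x
        split_ifs at ho hi hb ⊢ <;> omega
      · intro p q hpq
        constructor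
        · rw [happ]
          split_ifs with h
          · omega
          · exact (harc p q hpq).1
        · rw [happ]
          split_ifs with h
          · exfalso; obtain ⟨rfl, rfl⟩ := h; exact hyzA hpq
          · exact (harc p q hpq).2
      · intro p q hpq
        have e1 : ν₁ p q = ν p q := by
          rw [happ, if_neg]; rintro ⟨rfl, rfl⟩; exact hzyE hpq
        have e2 : ν₁ q p = ν q p := by
          rw [happ, if_neg]; rintro ⟨rfl, rfl⟩; exact hyzE hpq
        rw [e1, e2]; exact hedge p q hpq
      · intro p q h1 h2 h3'
        rw [happ, if_neg]
        · exact hzero p q h1 h2 h3'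
        · rintro ⟨rfl, rfl⟩; exact h2 hA
      · intro p q hμ
        by_cases h1' : p = z ∧ q = y
        · obtain ⟨hp, hq⟩ := h1'
          rw [hp, hq]
          have e1 : ν₁ z y = ν z y - 2 := by rw [happ]; simp
          omega
        · by_cases h2' : p = y ∧ q = z
          · obtain ⟨hp, hq⟩ := h2'
            rw [hp, hq]
            have e1 : ν₁ z y = ν z y - 2 := by rw [happ]; simp
            omega
          · have e1 : ν₁ p q = ν p q := by rw [happ, if_neg h1']
            have e2 : ν₁ q p = ν q p := by rw [happ, if_neg (by tauto)]
            have := hsupp p q hμ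
            omega
      · have hwu := weight_upd w ν z y (ν z y - 2)
        rw [← hν₁] at hwu
        have hmul : (ν z y - 2) * w z y ≤ ν z y * w z y :=
          Nat.mul_le_mul_right _ (by omega)
        omega
      · have hta := totalArcs_upd ν z y (ν z y - 2)
        rw [← hν₁] at hta
        omega
    · -- E-step : flip the edge (z,y)
      have hE : (z, y) ∈ G.E := by
        by_contra hE
        have h0 : μ z y = 0 := by
          by_cases hyz : (y, z) ∈ G.A
          · exact (hmoμ.1 y z hyz).2
          · exact hmoμ.2.2 z y hE hA hyz
        omega
      have hEyz : (y, z) ∈ G.E := G.E_symm z y hE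
      have hAyz : (y, z) ∉ G.A := (G.simple_EA z y hE).2
      have h1 : 1 ≤ ν z y := by rw [hνzy]; omega
      set ν₀ := upd ν z y (ν z y - 1) with hν₀
      set ν₁ := upd ν₀ y z (ν₀ y z + 1) with hν₁
      have hν₀yz : ν₀ y z = ν y z := by
        rw [hν₀, upd_apply, if_neg]; rintro ⟨rfl, _⟩; exact hzy_ne rfl
      have happ : ∀ p q, ν₁ p q =
          if p = y ∧ q = z then ν y z + 1 else if p = z ∧ q = y then ν z y - 1 else ν p q := by
        intro p q
        rw [hν₁, upd_apply, hν₀yz, hν₀, upd_apply]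
      have hsum : ∀ p q, ν₁ p q + ν₁ q p = ν p q + ν q p := by
        intro p q
        by_cases h1' : p = y ∧ q = z
        · obtain ⟨hp, hq⟩ := h1'
          rw [hp, hq]
          have e1 : ν₁ y z = ν y z + 1 := by rw [happ]; simp
          have e2 : ν₁ z y = ν z y - 1 := by
            rw [happ, if_neg (by rintro ⟨rfl, _⟩; exact hzy_ne rfl), if_pos ⟨rfl, rfl⟩]
          omega
        · by_cases h2' : p = z ∧ q = y
          · obtain ⟨hp, hq⟩ := h2'
            rw [hp, hq]
            have e1 : ν₁ y z = ν y z + 1 := by rw [happ]; simp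
            have e2 : ν₁ z y = ν z y - 1 := by
              rw [happ, if_neg (by rintro ⟨rfl, _⟩; exact hzy_ne rfl), if_pos ⟨rfl, rfl⟩]
            omega
          · have e1 : ν₁ p q = ν p q := by rw [happ, if_neg h1', if_neg h2']
            have e2 : ν₁ q p = ν q p := by
              rw [happ, if_neg (by tauto), if_neg (by tauto)]
            omega
      refine ih y ν₁ hc' hnd' hlast' ?_ ?_ ?_ ?_ ?_ ?_ ?_ ?_
      · intro p q hm
        have hpq := List.of_mem_zip hm
        have hpz : p ≠ z := fun h => hzny (h ▸ hpq.1)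
        have hqz : q ≠ z := fun h => hzny (List.mem_cons_of_mem y (h ▸ hpq.2))
        rw [happ, if_neg (by tauto), if_neg (by tauto)]
        exact hU p q (by rw [List.zip_cons_cons]; exact List.mem_cons_of_mem _ hm)
      · intro x
        have ho1 := outDeg_upd ν z y (ν z y - 1) x
        have hi1 := inDeg_upd ν z y (ν z y - 1) x
        rw [← hν₀] at ho1 hi1
        have ho2 := outDeg_upd ν₀ y z (ν₀ y z + 1) x
        have hi2 := inDeg_upd ν₀ y z (ν₀ y z + 1) x
        rw [← hν₁, hν₀yz] at ho2 hi2
        have hb := hbal x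
        split_ifs at ho1 hi1 ho2 hi2 hb ⊢ <;> omega
      · intro p q hpq
        have hne1 : ¬(p = y ∧ q = z) := by rintro ⟨rfl, rfl⟩; exact hAyz hpq
        have hne2 : ¬(p = z ∧ q = y) := by rintro ⟨rfl, rfl⟩; exact hA hpq
        have hne3 : ¬(q = y ∧ p = z) := by rintro ⟨rfl, rfl⟩; exact hA hpq
        have hne4 : ¬(q = z ∧ p = y) := by rintro ⟨rfl, rfl⟩; exact hAyz hpq
        constructor
        · rw [happ, if_neg hne1, if_neg hne2]; exact (harc p q hpq).1
        · rw [happ, if_neg hne3, if_neg hne4]; exact (harc p q hpq).2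
      · intro p q hpq
        have := hsum p q
        have := hedge p q hpq
        omega
      · intro p q hE1 hA1 hA2
        have hne1 : ¬(p = y ∧ q = z) := by rintro ⟨rfl, rfl⟩; exact hE1 hEyz
        have hne2 : ¬(p = z ∧ q = y) := by rintro ⟨rfl, rfl⟩; exact hE1 hE
        rw [happ, if_neg hne1, if_neg hne2]
        exact hzero p q hE1 hA1 hA2
      · intro p q hμ
        have := hsum p q
        have := hsupp p q hμ
        omega
      · have hw1 := weight_upd w ν z y (ν z y - 1)
        have hw2 := weight_upd w ν₀ y z (ν₀ y z + 1)
        rw [← hν₀] at hw1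
        rw [← hν₁, hν₀yz] at hw2
        have hwzy : w z y = w y z := hw z y hE
        have e1 : (ν y z + 1) * w y z = ν y z * w y z + w y z := by ring
        have e2 : (ν z y - 1) * w z y + w z y = ν z y * w z y := by
          have e : ν z y - 1 + 1 = ν z y := by omega
          calc (ν z y - 1) * w z y + w z y = (ν z y - 1 + 1) * w z y := by ring
            _ = ν z y * w z y := by rw [e]
        rw [hwzy] at hw1 e2
        omega
      · have ht1 := totalArcs_upd ν z y (ν z y - 1)
        have ht2 := totalArcs_upd ν₀ y z (ν₀ y z + 1)
        rw [← hν₀] at ht1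
        rw [← hν₁, hν₀yz] at ht2
        omega

lemma no_heavy_path (G : MixedGraph V) (w μD : V → V → ℕ)
    (hw : ∀ p q : V, (p, q) ∈ G.E → w p q = w q p)
    (hmo : IsMultiOrientation G μD) (heul : Eulerian μD)
    (hminweight : ∀ μ' : V → V → ℕ,
      IsMultiOrientation G μ' → Eulerian μ' → weight w μD ≤ weight w μ')
    (hminarcs : ∀ μ' : V → V → ℕ,
      IsMultiOrientation G μ' → Eulerian μ' → weight w μ' = weight w μD →
        totalArcs μD ≤ totalArcs μ')
    {u v : V} (ha : (u, v) ∈ G.A) (h3 : 3 ≤ μD u v) :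
    ¬ Relation.ReflTransGen (Step G μD) v u := by
  intro hreach
  obtain ⟨l, hc, hnd, hlast⟩ := exists_nodup_chain hreach
  set ν₀ := upd μD u v (μD u v - 2) with hν₀
  have happ : ∀ p q, ν₀ p q = if p = u ∧ q = v then μD u v - 2 else μD p q := by
    intro p q; rw [hν₀]; exact upd_apply μD u v (μD u v - 2) p q
  have hU0 : ∀ p q : V, (p, q) ∈ (v :: l).zip l → ν₀ p q = μD p q := by
    intro p q hm
    rw [happ, if_neg]
    intro h
    rw [h.1, h.2] at hm
    exact not_mem_zip_of_getLast l v hnd hlast v hm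
  have hbal0 : ∀ x, outDeg ν₀ x + (if x = u then 2 else 0)
      = inDeg ν₀ x + (if x = v then 2 else 0) := by
    intro x
    have ho := outDeg_upd μD u v (μD u v - 2) x
    have hi := inDeg_upd μD u v (μD u v - 2) x
    rw [← hν₀] at ho hi
    have hb : outDeg μD x = inDeg μD x := heul.1 x
    split_ifs at ho hi ⊢ <;> omega
  have harc0 : ∀ p q, (p, q) ∈ G.A → 1 ≤ ν₀ p q ∧ ν₀ q p = 0 := by
    intro p q hpq
    constructor
    · rw [happ]
      split_ifs with h
      · omega
      · exact (hmo.1 p q hpq).1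
    · rw [happ]
      split_ifs with h
      · exfalso; rw [h.1, h.2] at hpq; exact G.simple_A u v ha hpq
      · exact (hmo.1 p q hpq).2
  have hedge0 : ∀ p q, (p, q) ∈ G.E → 1 ≤ ν₀ p q + ν₀ q p := by
    intro p q hpq
    have e1 : ν₀ p q = μD p q := by
      rw [happ, if_neg]
      intro h
      rw [h.1, h.2] at hpq
      exact (G.simple_EA u v hpq).1 ha
    have e2 : ν₀ q p = μD q p := by
      rw [happ, if_neg]
      intro h
      rw [h.1, h.2] at hpq
      exact (G.simple_EA v u hpq).2 ha
    rw [e1, e2]; exact hmo.2.1 p q hpq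
  have hzero0 : ∀ p q, (p, q) ∉ G.E → (p, q) ∉ G.A → (q, p) ∉ G.A → ν₀ p q = 0 := by
    intro p q h1 h2 h3'
    rw [happ, if_neg]
    · exact hmo.2.2 p q h1 h2 h3'
    · intro h
      rw [h.1, h.2] at h2
      exact h2 ha
  have hsupp0 : ∀ p q, 0 < μD p q + μD q p → 0 < ν₀ p q + ν₀ q p := by
    intro p q hμ
    have huv_ne : u ≠ v := fun h => G.A_irrefl v (h ▸ ha)
    by_cases h1' : p = u ∧ q = v
    · obtain ⟨hp, hq⟩ := h1'
      rw [hp, hq]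
      have e1 : ν₀ u v = μD u v - 2 := by rw [happ]; simp
      omega
    · by_cases h2' : p = v ∧ q = u
      · obtain ⟨hp, hq⟩ := h2'
        rw [hp, hq]
        have e1 : ν₀ u v = μD u v - 2 := by rw [happ]; simp
        omega
      · have e1 : ν₀ p q = μD p q := by rw [happ, if_neg h1']
        have e2 : ν₀ q p = μD q p := by rw [happ, if_neg (by tauto)]
        omega
  have hwt0 : weight w ν₀ ≤ weight w μD := by
    have hwu := weight_upd w μD u v (μD u v - 2)
    rw [← hν₀] at hwu
    have hmul : (μD u v - 2) * w u v ≤ μD u v * w u v :=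
      Nat.mul_le_mul_right _ (by omega)
    omega
  have harcs0 : totalArcs ν₀ + 2 ≤ totalArcs μD := by
    have hta := totalArcs_upd μD u v (μD u v - 2)
    rw [← hν₀] at hta
    omega
  obtain ⟨ν', hmo', hbal', hsupp', hwt', harcs'⟩ :=
    build G w μD hw hmo u l v ν₀ hc hnd hlast hU0 hbal0 harc0 hedge0 hzero0 hsupp0 hwt0 harcs0
  have heul' : Eulerian ν' :=
    ⟨hbal', fun x y => Relation.ReflTransGen.mono (fun a b hab => hsupp' a b hab) x y (heul.2 x y)⟩
  have hge := hminweight ν' hmo' heul'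
  have heq : weight w ν' = weight w μD := le_antisymm hwt' hge
  have := hminarcs ν' hmo' heul' heq
  omega

lemma cut_bound (G : MixedGraph V) (μD : V → V → ℕ) (hbal : Balanced μD)
    {u v : V} (hnp : ¬ Relation.ReflTransGen (Step G μD) v u) :
    μD u v ≤ ∑ b ∈ G.A.filter (fun p => μD p.1 p.2 ≤ 2), μD b.1 b.2 := by
  classical
  set U : Finset V := Finset.univ.filter
    (fun x => Relation.ReflTransGen (Step G μD) v x) with hUdef
  have hvU : v ∈ U := by
    rw [hUdef]; exact Finset.mem_filter.2 ⟨Finset.mem_univ v, Relation.ReflTransGen.refl⟩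
  have huU : u ∉ U := by
    rw [hUdef]
    intro h
    exact hnp (Finset.mem_filter.1 h).2
  have hclosed : ∀ x ∈ U, ∀ y : V, Step G μD x y → y ∈ U := by
    intro x hx y hs
    rw [hUdef] at hx ⊢
    exact Finset.mem_filter.2 ⟨Finset.mem_univ y, (Finset.mem_filter.1 hx).2.tail hs⟩
  have e1 : (∑ x ∈ U, ∑ y ∈ U, μD x y) + (∑ x ∈ U, ∑ y ∈ Uᶜ, μD x y)
      = ∑ x ∈ U, outDeg μD x := by
    rw [← Finset.sum_add_distrib]
    exact Finset.sum_congr rfl (fun x _ => Finset.sum_add_sum_compl U (μD x))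
  have e2 : (∑ x ∈ U, ∑ y ∈ U, μD y x) + (∑ x ∈ U, ∑ y ∈ Uᶜ, μD y x)
      = ∑ x ∈ U, inDeg μD x := by
    rw [← Finset.sum_add_distrib]
    exact Finset.sum_congr rfl (fun x _ => Finset.sum_add_sum_compl U (fun y => μD y x))
  have e3 : ∑ x ∈ U, outDeg μD x = ∑ x ∈ U, inDeg μD x :=
    Finset.sum_congr rfl (fun x _ => hbal x)
  have e4 : ∑ x ∈ U, ∑ y ∈ U, μD x y = ∑ x ∈ U, ∑ y ∈ U, μD y x := Finset.sum_comm
  have hbalU : ∑ x ∈ U, ∑ y ∈ Uᶜ, μD x y = ∑ x ∈ U, ∑ y ∈ Uᶜ, μD y x := by omega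
  have hin : μD u v ≤ ∑ x ∈ U, ∑ y ∈ Uᶜ, μD y x := by
    have t1 : μD u v ≤ ∑ y ∈ Uᶜ, μD y v :=
      Finset.single_le_sum (f := fun y => μD y v) (fun i _ => Nat.zero_le _)
        (Finset.mem_compl.2 huU)
    calc μD u v ≤ ∑ y ∈ Uᶜ, μD y v := t1
      _ ≤ ∑ x ∈ U, ∑ y ∈ Uᶜ, μD y x :=
        Finset.single_le_sum (f := fun x => ∑ y ∈ Uᶜ, μD y x) (fun i _ => Nat.zero_le _) hvU
  have hout : ∑ x ∈ U, ∑ y ∈ Uᶜ, μD x y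
      ≤ ∑ b ∈ G.A.filter (fun p => μD p.1 p.2 ≤ 2), μD b.1 b.2 := by
    have hrw : ∑ x ∈ U, ∑ y ∈ Uᶜ, μD x y = ∑ p ∈ U ×ˢ Uᶜ, μD p.1 p.2 :=
      (Finset.sum_product U Uᶜ (fun p => μD p.1 p.2)).symm
    rw [hrw]
    have hsub : ∀ p ∈ U ×ˢ Uᶜ, μD p.1 p.2 ≠ 0 →
        p ∈ G.A.filter (fun q => μD q.1 q.2 ≤ 2) := by
      intro p hp hne
      obtain ⟨hp1, hp2⟩ := Finset.mem_product.1 hp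
      have hp2' : p.2 ∉ U := Finset.mem_compl.1 hp2
      have hns : ¬ Step G μD p.1 p.2 := fun hs => hp2' (hclosed p.1 hp1 p.2 hs)
      have hkey : (p.1, p.2) ∈ G.A ∧ μD p.1 p.2 ≤ 2 := by
        by_contra hcon
        apply hns
        refine ⟨by omega, ?_⟩
        intro hAm
        by_contra hlt
        exact hcon ⟨hAm, by omega⟩
      refine Finset.mem_filter.2 ⟨?_, hkey.2⟩
      have : (p.1, p.2) = p := Prod.mk.eta
      rw [← this]
      exact hkey.1
    calc ∑ p ∈ U ×ˢ Uᶜ, μD p.1 p.2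
        = ∑ p ∈ (U ×ˢ Uᶜ).filter (fun p => p ∈ G.A.filter (fun q => μD q.1 q.2 ≤ 2)),
            μD p.1 p.2 := (Finset.sum_filter_of_ne hsub).symm
      _ ≤ ∑ b ∈ G.A.filter (fun p => μD p.1 p.2 ≤ 2), μD b.1 b.2 := by
          apply Finset.sum_le_sum_of_subset
          intro p hp
          exact (Finset.mem_filter.1 hp).2
  omega


theorem arc_multiplicity_bound (G : MixedGraph V) (w : V → V → ℕ)
    (hw : ∀ u v : V, (u, v) ∈ G.E → w u v = w v u)
    (hsc : StronglyConnected G)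
    (μD : V → V → ℕ)
    (hmo : IsMultiOrientation G μD)
    (heul : Eulerian μD)
    (hminweight : ∀ μ' : V → V → ℕ,
      IsMultiOrientation G μ' → Eulerian μ' → weight w μD ≤ weight w μ')
    (hminarcs : ∀ μ' : V → V → ℕ,
      IsMultiOrientation G μ' → Eulerian μ' → weight w μ' = weight w μD →
        totalArcs μD ≤ totalArcs μ')
    (k : ℕ) (hk : k = G.A.card) :
    2 * (∑ a ∈ G.A, μD a.1 a.2) ≤ k ^ 2 + 4 * k := by
  classical
  subst hk
  set L := G.A.filter (fun p => μD p.1 p.2 ≤ 2) with hL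
  set H := G.A.filter (fun p => ¬ μD p.1 p.2 ≤ 2) with hH
  have hsplit : (∑ a ∈ L, μD a.1 a.2) + (∑ a ∈ H, μD a.1 a.2) = ∑ a ∈ G.A, μD a.1 a.2 :=
    Finset.sum_filter_add_sum_filter_not G.A _ _
  have hcard : L.card + H.card = G.A.card :=
    Finset.card_filter_add_card_filter_not _
  have hLb : ∑ a ∈ L, μD a.1 a.2 ≤ L.card * 2 := by
    have := Finset.sum_le_card_nsmul L (fun p => μD p.1 p.2) 2
      (fun x hx => (Finset.mem_filter.1 hx).2)
    simpa [smul_eq_mul] using this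
  have hHb : ∑ a ∈ H, μD a.1 a.2 ≤ H.card * (L.card * 2) := by
    have hbd : ∀ x ∈ H, μD x.1 x.2 ≤ L.card * 2 := by
      intro x hx
      obtain ⟨hxA, hx3⟩ := Finset.mem_filter.1 hx
      have h3 : 3 ≤ μD x.1 x.2 := by omega
      have hxA' : (x.1, x.2) ∈ G.A := by
        have : (x.1, x.2) = x := Prod.mk.eta
        rw [this]; exact hxA
      have hnp := no_heavy_path G w μD (fun p q h => hw p q h) hmo heul hminweight hminarcs hxA' h3
      have hcut := cut_bound G μD heul.1 hnp
      calc μD x.1 x.2 ≤ ∑ b ∈ L, μD b.1 b.2 := hcut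
        _ ≤ L.card * 2 := hLb
    have := Finset.sum_le_card_nsmul H (fun p => μD p.1 p.2) (L.card * 2) hbd
    simpa [smul_eq_mul] using this
  have hfinal : ∑ a ∈ G.A, μD a.1 a.2 ≤ L.card * 2 + H.card * (L.card * 2) := by omega
  nlinarith [two_mul_le_add_sq L.card H.card, hfinal, hcard, sq_nonneg (L.card + H.card)]


end Stmt0
end

section
/- Let (G,w,t) be an instance of BCPP with p = Σ_{v : t(v)>0} t(v). Let D be a t-balanced multi-orientation of G of minimum weight, and, subject to that, with the minimum total number of arcs Σ_{u,v} μ_D(u,v). Then for every edge uv of G, μ_D(u,v) + μ_D(v,u) ≤ max{p, 2}. -/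
/-!
Statement 1: Let `(G,w,t)` be an instance of BCPP with `p = Σ_{v : t(v)>0} t(v)`.  Let `D`
be a `t`-balanced multi-orientation of `G` of minimum weight, and, subject to that, with the
minimum total number of arcs.  Then for every edge `uv` of `G`,
`μ_D(u,v) + μ_D(v,u) ≤ max{p, 2}`.
-/

namespace Stmt1

variable {V : Type*} [Fintype V] [DecidableEq V]

/-- Out-degree of `v` in the directed multigraph with multiplicity function `μ`. -/
def outDeg (μ : V → V → ℕ) (v : V) : ℕ := ∑ u, μ v u

/-- In-degree of `v` in the directed multigraph with multiplicity function `μ`. -/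
def inDeg (μ : V → V → ℕ) (v : V) : ℕ := ∑ u, μ u v

/-- `μ` is `t`-balanced: `d⁺(v) − d⁻(v) = t(v)` for every vertex `v`. -/
def TBalanced (t : V → ℤ) (μ : V → V → ℕ) : Prop :=
  ∀ v, (outDeg μ v : ℤ) - (inDeg μ v : ℤ) = t v

/-- `μ` is a multi-orientation of the simple undirected graph `G`: each edge of `G` is
replaced by at least one copy of one of its two orientations, and nothing else appears. -/
def IsMultiOrientation (G : SimpleGraph V) (μ : V → V → ℕ) : Prop :=
  (∀ u v : V, G.Adj u v → 1 ≤ μ u v + μ v u) ∧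
  (∀ u v : V, ¬ G.Adj u v → μ u v = 0)

/-- The weight of a directed multigraph `μ` with respect to edge weights `w : Sym2 V → ℕ`. -/
def weight (w : Sym2 V → ℕ) (μ : V → V → ℕ) : ℕ := ∑ u, ∑ v, μ u v * w s(u, v)

/-- Total number of arcs of a directed multigraph. -/
def totalArcs (μ : V → V → ℕ) : ℕ := ∑ u, ∑ v, μ u v

/-! ### Summation helpers -/

lemma sum_ite_and₁ (a b : V) (f : V → ℤ) (x : V) :
    ∑ y : V, (if x = a ∧ y = b then f y else 0) = if x = a then f b else 0 := by
  by_cases h : x = a <;> simp [h]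

lemma sum_ite_and₂ (a b : V) (f : V → ℤ) (y : V) :
    ∑ x : V, (if x = a ∧ y = b then f x else 0) = if y = b then f a else 0 := by
  by_cases h : y = b <;> simp [h]

/-! ### The `tweak` operation: remove `c` copies of the arc `a → b`. -/

def tweak (μ : V → V → ℕ) (a b : V) (c : ℕ) : V → V → ℕ :=
  fun x y => if x = a ∧ y = b then μ a b - c else μ x y

lemma tweak_cast {μ : V → V → ℕ} {a b : V} {c : ℕ} (h : c ≤ μ a b) (x y : V) :
    (tweak μ a b c x y : ℤ) = μ x y - (if x = a ∧ y = b then (c : ℤ) else 0) := by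
  unfold tweak
  by_cases hP : x = a ∧ y = b
  · obtain ⟨rfl, rfl⟩ := hP
    simp only [and_self, if_true, eq_self_iff_true]
    omega
  · simp [hP]

lemma tweak_le (μ : V → V → ℕ) (a b : V) (c : ℕ) (x y : V) :
    tweak μ a b c x y ≤ μ x y := by
  unfold tweak
  split_ifs with h
  · obtain ⟨rfl, rfl⟩ := h; omega
  · exact le_rfl

lemma tweak_outDeg {μ : V → V → ℕ} {a b : V} {c : ℕ} (h : c ≤ μ a b) (x : V) :
    (outDeg (tweak μ a b c) x : ℤ)
      = outDeg μ x - (c : ℤ) * (if x = a then 1 else 0) := by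
  unfold outDeg
  push_cast
  rw [Finset.sum_congr rfl fun y _ => tweak_cast h x y, Finset.sum_sub_distrib,
    sum_ite_and₁ a b (fun _ => (c : ℤ)) x]
  split_ifs <;> ring

lemma tweak_inDeg {μ : V → V → ℕ} {a b : V} {c : ℕ} (h : c ≤ μ a b) (x : V) :
    (inDeg (tweak μ a b c) x : ℤ)
      = inDeg μ x - (c : ℤ) * (if x = b then 1 else 0) := by
  unfold inDeg
  push_cast
  rw [Finset.sum_congr rfl fun y _ => tweak_cast h y x, Finset.sum_sub_distrib,
    sum_ite_and₂ a b (fun _ => (c : ℤ)) x]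
  split_ifs <;> ring

lemma tweak_totalArcs {μ : V → V → ℕ} {a b : V} {c : ℕ} (h : c ≤ μ a b) :
    (totalArcs (tweak μ a b c) : ℤ) = totalArcs μ - c := by
  unfold totalArcs
  push_cast
  rw [Finset.sum_congr rfl fun x _ => by
    rw [Finset.sum_congr rfl fun y _ => tweak_cast h x y, Finset.sum_sub_distrib,
      sum_ite_and₁ a b (fun _ => (c : ℤ)) x]]
  rw [Finset.sum_sub_distrib]
  simp

lemma tweak_weight {μ : V → V → ℕ} {a b : V} {c : ℕ} (h : c ≤ μ a b) (w : Sym2 V → ℕ) :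
    (weight w (tweak μ a b c) : ℤ) = weight w μ - (c : ℤ) * w s(a, b) := by
  unfold weight
  push_cast
  have hterm : ∀ x y : V, (tweak μ a b c x y : ℤ) * w s(x, y)
      = (μ x y : ℤ) * w s(x, y) - (if x = a ∧ y = b then (c : ℤ) * w s(a, b) else 0) := by
    intro x y
    rw [tweak_cast h, sub_mul]
    congr 1
    by_cases hP : x = a ∧ y = b
    · obtain ⟨rfl, rfl⟩ := hP; simp
    · simp [hP]
  rw [Finset.sum_congr rfl fun x _ => by
    rw [Finset.sum_congr rfl fun y _ => hterm x y, Finset.sum_sub_distrib,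
      sum_ite_and₁ a b (fun _ => (c : ℤ) * w s(a, b)) x]]
  rw [Finset.sum_sub_distrib]
  simp

/-! ### The `swap` operation: reverse one copy of the arc `a → b`. -/

def swap (μ : V → V → ℕ) (a b : V) : V → V → ℕ := fun x y =>
  if x = a ∧ y = b then μ a b - 1 else if x = b ∧ y = a then μ b a + 1 else μ x y

lemma swap_cast {μ : V → V → ℕ} {a b : V} (hab : a ≠ b) (h : 1 ≤ μ a b) (x y : V) :
    (swap μ a b x y : ℤ) = (μ x y : ℤ) + (if x = b ∧ y = a then 1 else 0)
      - (if x = a ∧ y = b then 1 else 0) := by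
  unfold swap
  by_cases hP : x = a ∧ y = b
  · obtain ⟨rfl, rfl⟩ := hP
    have hQ : ¬(x = y ∧ y = x) := fun hc => hab (hc.1 ▸ rfl)
    simp only [and_self, if_true, eq_self_iff_true, if_neg hQ]
    omega
  · by_cases hQ : x = b ∧ y = a
    · obtain ⟨rfl, rfl⟩ := hQ
      simp only [and_self, if_true, eq_self_iff_true, if_neg hP]
      omega
    · simp [hP, hQ]

lemma swap_eq {μ : V → V → ℕ} {a b : V} {x y : V} (hx : x ≠ a) (hy : y ≠ a) :
    swap μ a b x y = μ x y := by
  unfold swap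
  rw [if_neg (fun hc => hx hc.1), if_neg (fun hc => hy hc.2)]

lemma swap_pair {μ : V → V → ℕ} {a b : V} (hab : a ≠ b) (h : 1 ≤ μ a b) (x y : V) :
    swap μ a b x y + swap μ a b y x = μ x y + μ y x := by
  have hz : ((swap μ a b x y : ℤ) + swap μ a b y x) = (μ x y : ℤ) + μ y x := by
    rw [swap_cast hab h, swap_cast hab h]
    have e1 : (if y = b ∧ x = a then (1:ℤ) else 0) = (if x = a ∧ y = b then (1:ℤ) else 0) := by
      by_cases h1 : x = a <;> by_cases h2 : y = b <;> simp [h1, h2]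
    have e2 : (if y = a ∧ x = b then (1:ℤ) else 0) = (if x = b ∧ y = a then (1:ℤ) else 0) := by
      by_cases h1 : x = b <;> by_cases h2 : y = a <;> simp [h1, h2]
    rw [e1, e2]; ring
  exact_mod_cast hz

lemma swap_diff {μ : V → V → ℕ} {a b : V} (hab : a ≠ b) (h : 1 ≤ μ a b) (x : V) :
    (outDeg (swap μ a b) x : ℤ) - inDeg (swap μ a b) x
      = (outDeg μ x : ℤ) - inDeg μ x
        + 2 * (if x = b then 1 else 0) - 2 * (if x = a then 1 else 0) := by
  have hout : (outDeg (swap μ a b) x : ℤ)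
      = outDeg μ x + (if x = b then 1 else 0) - (if x = a then 1 else 0) := by
    unfold outDeg
    push_cast
    rw [Finset.sum_congr rfl fun y _ => swap_cast hab h x y]
    rw [Finset.sum_sub_distrib, Finset.sum_add_distrib,
      sum_ite_and₁ b a (fun _ => (1:ℤ)) x, sum_ite_and₁ a b (fun _ => (1:ℤ)) x]
  have hin : (inDeg (swap μ a b) x : ℤ)
      = inDeg μ x + (if x = a then 1 else 0) - (if x = b then 1 else 0) := by
    unfold inDeg
    push_cast
    rw [Finset.sum_congr rfl fun y _ => swap_cast hab h y x]
    rw [Finset.sum_sub_distrib, Finset.sum_add_distrib,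
      sum_ite_and₂ b a (fun _ => (1:ℤ)) x, sum_ite_and₂ a b (fun _ => (1:ℤ)) x]
  rw [hout, hin]; ring

lemma swap_totalArcs {μ : V → V → ℕ} {a b : V} (hab : a ≠ b) (h : 1 ≤ μ a b) :
    totalArcs (swap μ a b) = totalArcs μ := by
  have hz : (totalArcs (swap μ a b) : ℤ) = totalArcs μ := by
    unfold totalArcs
    push_cast
    rw [Finset.sum_congr rfl fun x _ => by
      rw [Finset.sum_congr rfl fun y _ => swap_cast hab h x y, Finset.sum_sub_distrib,
        Finset.sum_add_distrib, sum_ite_and₁ b a (fun _ => (1:ℤ)) x,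
        sum_ite_and₁ a b (fun _ => (1:ℤ)) x]]
    rw [Finset.sum_sub_distrib, Finset.sum_add_distrib]
    simp
  exact_mod_cast hz

lemma swap_weight {μ : V → V → ℕ} {a b : V} (hab : a ≠ b) (h : 1 ≤ μ a b)
    (w : Sym2 V → ℕ) : weight w (swap μ a b) = weight w μ := by
  have hterm : ∀ x y : V, (swap μ a b x y : ℤ) * w s(x, y)
      = (μ x y : ℤ) * w s(x, y) + (if x = b ∧ y = a then (w s(b, a) : ℤ) else 0)
        - (if x = a ∧ y = b then (w s(a, b) : ℤ) else 0) := by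
    intro x y
    rw [swap_cast hab h, sub_mul, add_mul]
    congr 2
    · by_cases hQ : x = b ∧ y = a
      · obtain ⟨rfl, rfl⟩ := hQ; simp
      · simp [hQ]
    · by_cases hP : x = a ∧ y = b
      · obtain ⟨rfl, rfl⟩ := hP; simp
      · simp [hP]
  have hz : (weight w (swap μ a b) : ℤ) = weight w μ := by
    unfold weight
    push_cast
    rw [Finset.sum_congr rfl fun x _ => by
      rw [Finset.sum_congr rfl fun y _ => hterm x y, Finset.sum_sub_distrib,
        Finset.sum_add_distrib, sum_ite_and₁ b a (fun _ => (w s(b, a) : ℤ)) x,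
        sum_ite_and₁ a b (fun _ => (w s(a, b) : ℤ)) x]]
    rw [Finset.sum_sub_distrib, Finset.sum_add_distrib]
    have : s(b, a) = s(a, b) := Sym2.eq_swap
    simp [this]
  exact_mod_cast hz

/-! ### Reversing a path -/

def revPath (μ : V → V → ℕ) : V → List V → (V → V → ℕ)
  | _, [] => μ
  | a, b :: l => revPath (swap μ a b) b l

lemma revPath_spec (w : Sym2 V → ℕ) :
    ∀ (l : List V) (μ : V → V → ℕ) (a : V),
      List.Chain (fun x y => 0 < μ x y) a l → (a :: l).Nodup →
      (∀ x y, revPath μ a l x y + revPath μ a l y x = μ x y + μ y x) ∧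
      weight w (revPath μ a l) = weight w μ ∧
      totalArcs (revPath μ a l) = totalArcs μ ∧
      (∀ x, (outDeg (revPath μ a l) x : ℤ) - inDeg (revPath μ a l) x
          = (outDeg μ x : ℤ) - inDeg μ x
            + 2 * (if x = (a :: l).getLast (List.cons_ne_nil a l) then (1:ℤ) else 0)
            - 2 * (if x = a then (1:ℤ) else 0))
  | [], μ, a, _, _ => by
    refine ⟨fun x y => rfl, rfl, rfl, fun x => ?_⟩
    show (outDeg μ x : ℤ) - inDeg μ x = _
    simp only [List.getLast_singleton]
    by_cases hx : x = a <;> simp [hx]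
  | b :: l, μ, a, hchain, hnodup => by
    have hnotmem : a ∉ b :: l := (List.nodup_cons.mp hnodup).1
    have hab : a ≠ b := fun h => hnotmem (h ▸ List.mem_cons_self)
    have hpos : 1 ≤ μ a b := (List.chain_cons.mp hchain).1
    have htail : List.Chain (fun x y => 0 < μ x y) b l := (List.chain_cons.mp hchain).2
    have hchain' : List.Chain (fun x y => 0 < swap μ a b x y) b l := by
      have := List.IsChain.iff_mem.mp htail
      refine this.imp fun x y hxy => ?_
      have hx : x ≠ a := fun h => hnotmem (h ▸ hxy.1)
      have hy : y ≠ a := fun h => hnotmem (h ▸ hxy.2.1)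
      rw [swap_eq hx hy]
      exact hxy.2.2
    have hnodup' : (b :: l).Nodup := (List.nodup_cons.mp hnodup).2
    have IH := revPath_spec w l (swap μ a b) b hchain' hnodup'
    have hrw : revPath μ a (b :: l) = revPath (swap μ a b) b l := rfl
    rw [hrw]
    refine ⟨fun x y => (IH.1 x y).trans (swap_pair hab hpos x y),
      (IH.2.1).trans (swap_weight hab hpos w),
      (IH.2.2.1).trans (swap_totalArcs hab hpos), fun x => ?_⟩
    rw [IH.2.2.2 x, swap_diff hab hpos x]
    have hlast : (a :: b :: l).getLast (List.cons_ne_nil _ _)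
        = (b :: l).getLast (List.cons_ne_nil _ _) := List.getLast_cons_cons
    rw [hlast]
    ring

/-! ### Extracting a duplicate-free chain -/

lemma getLast_eq_getLast {l₁ l₂ : List V} (h : l₁ = l₂) (h₁ : l₁ ≠ []) :
    l₁.getLast h₁ = l₂.getLast (h ▸ h₁) := by subst h; rfl

lemma exists_nodup_chain {R : V → V → Prop} :
    ∀ (n : ℕ) (l : List V) (a : V), l.length ≤ n → List.Chain R a l →
      ∃ l' : List V, List.Chain R a l' ∧ (a :: l').Nodup ∧
        (a :: l').getLast (List.cons_ne_nil a l') = (a :: l).getLast (List.cons_ne_nil a l) ∧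
        ∀ x ∈ a :: l', x ∈ a :: l := by
  intro n
  induction n with
  | zero =>
    intro l a hl _
    have : l = [] := List.length_eq_zero_iff.mp (Nat.le_zero.mp hl)
    subst this
    exact ⟨[], List.Chain.nil, List.nodup_singleton a, rfl, fun x hx => hx⟩
  | succ n IH =>
    intro l a hl hchain
    match l with
    | [] => exact ⟨[], List.Chain.nil, List.nodup_singleton a, rfl, fun x hx => hx⟩
    | b :: m =>
      by_cases hmem : a ∈ b :: m
      · obtain ⟨s, t', hst⟩ := List.append_of_mem hmem
        have hchain2 : List.Chain R a t' := by
          rw [hst] at hchain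
          exact (List.isChain_cons_split.mp hchain).2
        have hlen : t'.length ≤ n := by
          have : (b :: m).length = s.length + (t'.length + 1) := by
            rw [hst]; simp
          simp only [List.length_cons] at this hl
          omega
        obtain ⟨l', h1, h2, h3, h4⟩ := IH t' a hlen hchain2
        refine ⟨l', h1, h2, ?_, ?_⟩
        · rw [h3]
          have hEq : a :: b :: m = (a :: s) ++ (a :: t') := by rw [hst]; rfl
          exact ((getLast_eq_getLast hEq _).trans
            (List.getLast_append_of_ne_nil _ (List.cons_ne_nil _ _))).symm
        · intro x hx
          rcases List.mem_cons.mp (h4 x hx) with h | h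
          · exact h ▸ List.mem_cons_self
          · rw [hst]
            exact List.mem_cons_of_mem _ (List.mem_append_right s (List.mem_cons_of_mem a h))
      · have hRab : R a b := (List.chain_cons.mp hchain).1
        have htail : List.Chain R b m := (List.chain_cons.mp hchain).2
        have hlen : m.length ≤ n := by simp only [List.length_cons] at hl; omega
        obtain ⟨l', h1, h2, h3, h4⟩ := IH m b hlen htail
        refine ⟨b :: l', List.chain_cons.mpr ⟨hRab, h1⟩, ?_, ?_, ?_⟩
        · rw [List.nodup_cons]
          exact ⟨fun hc => hmem (h4 a hc), h2⟩
        · rw [List.getLast_cons_cons, List.getLast_cons_cons, h3]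
        · intro x hx
          rcases List.mem_cons.mp hx with h | h
          · exact h ▸ List.mem_cons_self
          · exact List.mem_cons_of_mem _ (h4 x h)


theorem edge_multiplicity_bound (G : SimpleGraph V) (w : Sym2 V → ℕ) (t : V → ℤ)
    (ht : ∑ v, t v = 0)
    (p : ℤ) (hp : p = ∑ v ∈ Finset.univ.filter (fun v => 0 < t v), t v)
    (μD : V → V → ℕ)
    (hmo : IsMultiOrientation G μD)
    (hbal : TBalanced t μD)
    (hminweight : ∀ μ' : V → V → ℕ,
      IsMultiOrientation G μ' → TBalanced t μ' → weight w μD ≤ weight w μ')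
    (hminarcs : ∀ μ' : V → V → ℕ,
      IsMultiOrientation G μ' → TBalanced t μ' → weight w μ' = weight w μD →
        totalArcs μD ≤ totalArcs μ') :
    ∀ u v : V, G.Adj u v → ((μD u v + μD v u : ℕ) : ℤ) ≤ max p 2 := by
  classical
  -- the master contradiction: a balanced orientation of no larger weight and
  -- strictly fewer arcs contradicts minimality
  have contra : ∀ μ' : V → V → ℕ, IsMultiOrientation G μ' → TBalanced t μ' →
      weight w μ' ≤ weight w μD → totalArcs μ' < totalArcs μD → False := by
    intro μ' h1 h2 h3 h4
    have h5 := hminweight μ' h1 h2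
    have h6 := hminarcs μ' h1 h2 (le_antisymm h3 h5)
    omega
  -- Case A: both orientations of some edge used, and total multiplicity at least 3
  have caseA : ∀ u v : V, G.Adj u v → 1 ≤ μD u v → 1 ≤ μD v u →
      3 ≤ μD u v + μD v u → False := by
    intro u v hadj h1 h2 h3
    have hne : u ≠ v := hadj.ne
    set μ₁ := tweak μD u v 1 with hμ₁
    have hμ₁vu : μ₁ v u = μD v u := by
      rw [hμ₁]; unfold tweak
      rw [if_neg (fun hc => hne hc.2)]
    set μ₂ := tweak μ₁ v u 1 with hμ₂
    have h2' : 1 ≤ μ₁ v u := by rw [hμ₁vu]; exact h2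
    have hval : ∀ x y, μ₂ x y = μD x y ∨ (x = u ∧ y = v ∧ μ₂ x y = μD u v - 1)
        ∨ (x = v ∧ y = u ∧ μ₂ x y = μD v u - 1) := by
      intro x y
      by_cases hP : x = u ∧ y = v
      · refine Or.inr (Or.inl ⟨hP.1, hP.2, ?_⟩)
        have hn : ¬(x = v ∧ y = u) := fun hc => hne (hP.1.symm.trans hc.1)
        rw [hμ₂]; unfold tweak
        rw [if_neg hn, hμ₁]; unfold tweak
        rw [if_pos hP]
      · by_cases hQ : x = v ∧ y = u
        · refine Or.inr (Or.inr ⟨hQ.1, hQ.2, ?_⟩)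
          rw [hμ₂]; unfold tweak
          rw [if_pos hQ, hμ₁vu]
        · refine Or.inl ?_
          rw [hμ₂]; unfold tweak
          rw [if_neg hQ, hμ₁]; unfold tweak
          rw [if_neg hP]
    have hle : ∀ x y, μ₂ x y ≤ μD x y := by
      intro x y
      calc μ₂ x y ≤ μ₁ x y := tweak_le μ₁ v u 1 x y
        _ ≤ μD x y := tweak_le μD u v 1 x y
    have hmo₂ : IsMultiOrientation G μ₂ := by
      constructor
      · intro x y hxy
        have hadj1 := hmo.1 x y hxy
        rcases hval x y with e1 | ⟨hxu, hyv, e1⟩ | ⟨hxv, hyu, e1⟩ <;>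
          rcases hval y x with e2 | ⟨hyu', hxv', e2⟩ | ⟨hyv', hxu', e2⟩ <;>
          subst_vars <;> first | exact absurd rfl hne | omega
      · intro x y hxy
        have h0 : μD x y = 0 := hmo.2 x y hxy
        have := hle x y
        omega
    have hbal₂ : TBalanced t μ₂ := by
      intro x
      have hb := hbal x
      have ho1 := tweak_outDeg (μ := μD) (a := u) (b := v) (c := 1) h1 x
      have hi1 := tweak_inDeg (μ := μD) (a := u) (b := v) (c := 1) h1 x
      have ho2 := tweak_outDeg (μ := μ₁) (a := v) (b := u) (c := 1) h2' x
      have hi2 := tweak_inDeg (μ := μ₁) (a := v) (b := u) (c := 1) h2' x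
      rw [← hμ₁] at ho1 hi1
      rw [← hμ₂] at ho2 hi2
      rw [ho2, hi2, ho1, hi1]
      push_cast
      linarith [hb]
    have hw₂ : weight w μ₂ ≤ weight w μD := by
      have hw1 := tweak_weight (μ := μD) (a := u) (b := v) (c := 1) h1 w
      have hw2 := tweak_weight (μ := μ₁) (a := v) (b := u) (c := 1) h2' w
      rw [← hμ₁] at hw1
      rw [← hμ₂] at hw2
      have hle1 : (weight w μ₂ : ℤ) ≤ weight w μD := by
        rw [hw2, hw1]
        have n1 : (0:ℤ) ≤ w s(u, v) := Int.natCast_nonneg _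
        have n2 : (0:ℤ) ≤ w s(v, u) := Int.natCast_nonneg _
        push_cast
        linarith
      exact_mod_cast hle1
    have ha₂ : totalArcs μ₂ < totalArcs μD := by
      have ha1 := tweak_totalArcs (μ := μD) (a := u) (b := v) (c := 1) h1
      have ha2 := tweak_totalArcs (μ := μ₁) (a := v) (b := u) (c := 1) h2'
      rw [← hμ₁] at ha1
      rw [← hμ₂] at ha2
      have : (totalArcs μ₂ : ℤ) < totalArcs μD := by rw [ha2, ha1]; push_cast; linarith
      exact_mod_cast this
    exact contra μ₂ hmo₂ hbal₂ hw₂ ha₂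
  -- the key one-sided argument
  have key : ∀ a b : V, G.Adj a b → μD b a = 0 → 3 ≤ μD a b → p < (μD a b : ℤ) → False := by
    intro a b hadj hba h3 hplt
    have hne : a ≠ b := hadj.ne
    set R : V → V → Prop := fun x y => 0 < μD x y with hR
    by_cases hreach : Relation.ReflTransGen R b a
    · -- there is a directed path from b back to a: reverse the resulting cycle
      obtain ⟨l0, hchain0, hlast0⟩ := List.exists_isChain_cons_of_relationReflTransGen hreach
      obtain ⟨l, hchain, hnodup, hlast, hsub⟩ :=
        exists_nodup_chain l0.length l0 b le_rfl hchain0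
      have hlast' : (b :: l).getLast (List.cons_ne_nil _ _) = a := hlast.trans hlast0
      have h2le : 2 ≤ μD a b := by omega
      set μ₀ : V → V → ℕ := tweak μD a b 2 with hμ₀
      have hμ₀val : ∀ x y, μ₀ x y = μD x y ∨ (x = a ∧ y = b ∧ μ₀ x y = μD a b - 2) := by
        intro x y
        by_cases hP : x = a ∧ y = b
        · refine Or.inr ⟨hP.1, hP.2, ?_⟩
          rw [hμ₀]; unfold tweak; rw [if_pos hP]
        · refine Or.inl ?_
          rw [hμ₀]; unfold tweak; rw [if_neg hP]
      have hμ₀le : ∀ x y, μ₀ x y ≤ μD x y := tweak_le μD a b 2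
      have hchain₀ : List.Chain (fun x y => 0 < μ₀ x y) b l := by
        refine List.IsChain.imp (fun x y hxy => ?_) hchain
        rcases hμ₀val x y with e | ⟨_, _, e⟩ <;> rw [e] <;> [exact hxy; omega]
      obtain ⟨hpair, hwt, hta, hdiff⟩ := revPath_spec w l μ₀ b hchain₀ hnodup
      set ν := revPath μ₀ b l with hν
      have hmoν : IsMultiOrientation G ν := by
        constructor
        · intro x y hxy
          have hadj1 := hmo.1 x y hxy
          have hpxy := hpair x y
          rcases hμ₀val x y with e1 | ⟨hxa, hyb, e1⟩ <;>
            rcases hμ₀val y x with e2 | ⟨hya, hxb, e2⟩ <;>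
            subst_vars <;> first | exact absurd rfl hne | omega
        · intro x y hxy
          have h0 : μD x y = 0 := hmo.2 x y hxy
          have h0' : μD y x = 0 := hmo.2 y x fun hc => hxy hc.symm
          have hpxy := hpair x y
          have l1 := hμ₀le x y
          have l2 := hμ₀le y x
          omega
      have hbalν : TBalanced t ν := by
        intro x
        have hd := hdiff x
        rw [hlast'] at hd
        have ho := tweak_outDeg (μ := μD) (a := a) (b := b) (c := 2) h2le x
        have hi := tweak_inDeg (μ := μD) (a := a) (b := b) (c := 2) h2le x
        rw [← hμ₀] at ho hi
        rw [ho, hi] at hd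
        have hb := hbal x
        rw [hd]
        push_cast
        linarith
      have hwν : weight w ν ≤ weight w μD := by
        have hw0 := tweak_weight (μ := μD) (a := a) (b := b) (c := 2) h2le w
        rw [← hμ₀] at hw0
        have : (weight w ν : ℤ) ≤ weight w μD := by
          rw [hwt, hw0]
          have n1 : (0:ℤ) ≤ w s(a, b) := Int.natCast_nonneg _
          push_cast
          linarith
        exact_mod_cast this
      have haν : totalArcs ν < totalArcs μD := by
        have ha0 := tweak_totalArcs (μ := μD) (a := a) (b := b) (c := 2) h2le
        rw [← hμ₀] at ha0
        have : (totalArcs ν : ℤ) < totalArcs μD := by rw [hta, ha0]; push_cast; linarith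
        exact_mod_cast this
      exact contra ν hmoν hbalν hwν haν
    · -- a is not reachable from b: counting contradiction
      set S : Finset V := Finset.univ.filter (fun x => Relation.ReflTransGen R b x) with hS
      have hbS : b ∈ S := by
        rw [hS]; simp only [Finset.mem_filter, Finset.mem_univ, true_and]
        exact Relation.ReflTransGen.refl
      have haS : a ∉ S := by
        rw [hS]; simp only [Finset.mem_filter, Finset.mem_univ, true_and]
        exact hreach
      have hout0 : ∀ x ∈ S, ∀ y, y ∉ S → μD x y = 0 := by
        intro x hx y hy
        by_contra hne0
        have hpos : 0 < μD x y := Nat.pos_of_ne_zero hne0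
        have hxS : Relation.ReflTransGen R b x := by
          rw [hS] at hx
          simpa using hx
        apply hy
        rw [hS]; simp only [Finset.mem_filter, Finset.mem_univ, true_and]
        exact hxS.tail hpos
      have e1 : ∑ x ∈ S, t x = ∑ x ∈ S, ((outDeg μD x : ℤ) - inDeg μD x) :=
        Finset.sum_congr rfl fun x _ => (hbal x).symm
      have e2 : ∑ x ∈ S, ((outDeg μD x : ℤ) - inDeg μD x)
          = - ∑ x ∈ S, ∑ y ∈ Sᶜ, (μD y x : ℤ) := by
        unfold outDeg inDeg
        push_cast
        rw [Finset.sum_sub_distrib]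
        have eo : ∑ x ∈ S, ∑ y, (μD x y : ℤ)
            = ∑ x ∈ S, ∑ y ∈ S, (μD x y : ℤ) + ∑ x ∈ S, ∑ y ∈ Sᶜ, (μD x y : ℤ) := by
          rw [← Finset.sum_add_distrib]
          exact Finset.sum_congr rfl fun x _ => (Finset.sum_add_sum_compl S _).symm
        have ei : ∑ x ∈ S, ∑ y, (μD y x : ℤ)
            = ∑ x ∈ S, ∑ y ∈ S, (μD y x : ℤ) + ∑ x ∈ S, ∑ y ∈ Sᶜ, (μD y x : ℤ) := by
          rw [← Finset.sum_add_distrib]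
          exact Finset.sum_congr rfl fun x _ => (Finset.sum_add_sum_compl S _).symm
        have ezero : ∑ x ∈ S, ∑ y ∈ Sᶜ, (μD x y : ℤ) = 0 :=
          Finset.sum_eq_zero fun x hx => Finset.sum_eq_zero fun y hy => by
            rw [hout0 x hx y (Finset.mem_compl.mp hy)]; rfl
        have ecomm : ∑ x ∈ S, ∑ y ∈ S, (μD x y : ℤ) = ∑ x ∈ S, ∑ y ∈ S, (μD y x : ℤ) :=
          Finset.sum_comm
        rw [eo, ei, ezero, ecomm]
        ring
      have e3 : (μD a b : ℤ) ≤ ∑ x ∈ S, ∑ y ∈ Sᶜ, (μD y x : ℤ) := by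
        have hterm : (μD a b : ℤ) ≤ ∑ y ∈ Sᶜ, (μD y b : ℤ) :=
          Finset.single_le_sum (f := fun y => (μD y b : ℤ))
            (fun i _ => Int.natCast_nonneg _) (Finset.mem_compl.mpr haS)
        calc (μD a b : ℤ) ≤ ∑ y ∈ Sᶜ, (μD y b : ℤ) := hterm
          _ ≤ ∑ x ∈ S, ∑ y ∈ Sᶜ, (μD y x : ℤ) :=
            Finset.single_le_sum (f := fun x => ∑ y ∈ Sᶜ, (μD y x : ℤ))
              (fun i _ => Finset.sum_nonneg fun j _ => Int.natCast_nonneg _) hbS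
      have hneg : ∑ x ∈ Finset.univ.filter (fun x => ¬ 0 < t x), t x = -p := by
        have hsp := Finset.sum_filter_add_sum_filter_not Finset.univ (fun x => 0 < t x) t
        rw [ht, ← hp] at hsp
        linarith
      have hTlow : -p ≤ ∑ x ∈ S, t x := by
        have hsplitS := Finset.sum_filter_add_sum_filter_not S (fun x => 0 < t x) t
        have h1 : (0:ℤ) ≤ ∑ x ∈ S.filter (fun x => 0 < t x), t x :=
          Finset.sum_nonneg fun i hi => le_of_lt (Finset.mem_filter.mp hi).2
        have hsub : S.filter (fun x => ¬ 0 < t x)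
            ⊆ Finset.univ.filter (fun x => ¬ 0 < t x) :=
          Finset.filter_subset_filter _ (Finset.subset_univ S)
        have hdecomp := Finset.sum_sdiff (f := t) hsub
        have h3' : ∑ x ∈ (Finset.univ.filter (fun x => ¬ 0 < t x))
            \ (S.filter (fun x => ¬ 0 < t x)), t x ≤ 0 :=
          Finset.sum_nonpos fun i hi => by
            have := (Finset.mem_filter.mp (Finset.mem_sdiff.mp hi).1).2
            linarith
        linarith
      have hup : ∑ x ∈ S, t x ≤ -(μD a b : ℤ) := by
        rw [e1, e2]
        linarith
      linarith
  -- assemble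
  intro u v hadj
  by_contra hcon
  push_neg at hcon
  have hge2 : (2:ℤ) < ((μD u v + μD v u : ℕ) : ℤ) := lt_of_le_of_lt (le_max_right p 2) hcon
  have hgep : p < ((μD u v + μD v u : ℕ) : ℤ) := lt_of_le_of_lt (le_max_left p 2) hcon
  have hsum3 : 3 ≤ μD u v + μD v u := by
    push_cast at hge2
    omega
  by_cases hboth : 1 ≤ μD u v ∧ 1 ≤ μD v u
  · exact caseA u v hadj hboth.1 hboth.2 hsum3
  · rcases Nat.eq_zero_or_pos (μD v u) with h0 | hp1
    · refine key u v hadj h0 (by omega) ?_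
      push_cast at hgep ⊢
      omega
    · rcases Nat.eq_zero_or_pos (μD u v) with h0' | hp2
      · refine key v u hadj.symm h0' (by omega) ?_
        push_cast at hgep ⊢
        omega
      · exact absurd ⟨hp2, hp1⟩ hboth

end Stmt1
end

section
/- Let H be an undirected multigraph on a finite vertex set V and let t : V → ℤ be a demand function with Σ_v t(v) = 0. Then H admits a t-balanced orientation (a directed multigraph D with μ_D(u,v) + μ_D(v,u) = μ_H({u,v}) for every pair u,v and d⁺_D(v) − d⁻_D(v) = t(v) for all v) if and only if H has a t-road and, for every vertex v of H, d_H(v) − t(v) is even. -/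
/-!
Statement 2: Let `H` be an undirected multigraph on a finite vertex set `V` and `t : V → ℤ`
a demand function with `Σ_v t(v) = 0`.  Then `H` admits a `t`-balanced orientation if and
only if `H` has a `t`-road and, for every vertex `v` of `H`, `d_H(v) − t(v)` is even.
-/

namespace Stmt2

variable {V : Type*} [Fintype V] [DecidableEq V]

/-- Out-degree of `v` in the directed multigraph with multiplicity function `μ`. -/
def outDeg (μ : V → V → ℕ) (v : V) : ℕ := ∑ u, μ v u

/-- In-degree of `v` in the directed multigraph with multiplicity function `μ`. -/
def inDeg (μ : V → V → ℕ) (v : V) : ℕ := ∑ u, μ u v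

/-- Degree of `v` in the undirected multigraph with (symmetric) multiplicity function `μH`. -/
def degH (μH : V → V → ℕ) (v : V) : ℕ := ∑ u, μH v u

/-- A `t`-road of the undirected multigraph `μH`: a directed multigraph `μT` using, between
any two vertices, at most as many arcs as `μH` has parallel edges, such that
`d⁺(v) − d⁻(v) = t(v)` for every vertex `v`. -/
def IsTRoad (μH : V → V → ℕ) (t : V → ℤ) (μT : V → V → ℕ) : Prop :=
  (∀ u v : V, μT u v + μT v u ≤ μH u v) ∧
  (∀ v, (outDeg μT v : ℤ) - (inDeg μT v : ℤ) = t v)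

set_option linter.unusedSectionVars false

def rs (x : V → V → ℤ) (v : V) : ℤ := ∑ u, x v u

def Good (μH : V → V → ℕ) (x : V → V → ℤ) : Prop :=
  (∀ u v, x u v = - x v u) ∧ (∀ u v, -(μH u v : ℤ) ≤ x u v ∧ x u v ≤ (μH u v : ℤ)) ∧
    (∀ u v, (2 : ℤ) ∣ x u v + (μH u v : ℤ))

def psi (t : V → ℤ) (x : V → V → ℤ) : ℕ := ∑ v, (rs x v - t v).natAbs

lemma sum_sum_zero (x : V → V → ℤ) (hA : ∀ u v, x u v = - x v u) (s : Finset V) :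
    ∑ v ∈ s, ∑ u ∈ s, x v u = 0 := by
  have h : ∑ v ∈ s, ∑ u ∈ s, x v u = - ∑ v ∈ s, ∑ u ∈ s, x v u := by
    calc ∑ v ∈ s, ∑ u ∈ s, x v u = ∑ v ∈ s, ∑ u ∈ s, -(x u v) :=
          Finset.sum_congr rfl fun v _ => Finset.sum_congr rfl fun u _ => hA v u
      _ = - ∑ v ∈ s, ∑ u ∈ s, x u v := by simp
      _ = - ∑ v ∈ s, ∑ u ∈ s, x v u := by rw [Finset.sum_comm]
  linarith

lemma exists_deficit (μH : V → V → ℕ) (t : V → ℤ)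
    (y : V → V → ℤ) (hyA : ∀ u v, y u v = - y v u)
    (hyb : ∀ u v, -(μH u v : ℤ) ≤ y u v) (hyr : ∀ v, rs y v = t v)
    (x : V → V → ℤ) (hA : ∀ u v, x u v = - x v u) (a : V) (ha : t a < rs x a) :
    ∃ b, Relation.ReflTransGen (fun u v => -(μH u v : ℤ) < x u v) a b ∧ rs x b < t b := by
  classical
  set R : V → V → Prop := fun u v => -(μH u v : ℤ) < x u v with hR
  by_contra hcon
  push_neg at hcon
  set S : Finset V := Finset.univ.filter (fun v => Relation.ReflTransGen R a v) with hS
  have hmem : ∀ v, v ∈ S ↔ Relation.ReflTransGen R a v := by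
    intro v
    simp [hS]
  have haS : a ∈ S := (hmem a).2 Relation.ReflTransGen.refl
  have hsplit : ∀ (z : V → V → ℤ), (∀ u v, z u v = - z v u) →
      ∑ v ∈ S, rs z v = ∑ v ∈ S, ∑ u ∈ Sᶜ, z v u := by
    intro z hz
    have h1 : ∀ v, rs z v = ∑ u ∈ S, z v u + ∑ u ∈ Sᶜ, z v u :=
      fun v => (Finset.sum_add_sum_compl S (z v)).symm
    rw [Finset.sum_congr rfl fun v _ => h1 v, Finset.sum_add_distrib,
      sum_sum_zero z hz S, zero_add]
  have hcross : ∑ v ∈ S, ∑ u ∈ Sᶜ, x v u ≤ ∑ v ∈ S, ∑ u ∈ Sᶜ, y v u := by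
    refine Finset.sum_le_sum fun v hv => Finset.sum_le_sum fun u hu => ?_
    have hvS : Relation.ReflTransGen R a v := (hmem v).1 hv
    have huS : u ∉ S := Finset.mem_compl.1 hu
    have hnR : ¬ R v u := fun h => huS ((hmem u).2 (hvS.tail h))
    have hle : x v u ≤ -(μH v u : ℤ) := not_lt.1 hnR
    exact hle.trans (hyb v u)
  have hstrict : ∑ v ∈ S, t v < ∑ v ∈ S, rs x v :=
    Finset.sum_lt_sum (fun v hv => hcon v ((hmem v).1 hv)) ⟨a, haS, ha⟩
  have hyeq : ∑ v ∈ S, rs y v = ∑ v ∈ S, t v := Finset.sum_congr rfl fun v _ => hyr v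
  have e1 := hsplit x hA
  have e2 := hsplit y hyA
  linarith

lemma psi_split (f : V → ℕ) (a c : V) (hac : a ≠ c) :
    ∑ v, f v = f a + f c + ∑ v ∈ (Finset.univ.erase a).erase c, f v := by
  rw [← Finset.add_sum_erase _ f (Finset.mem_univ a),
    ← Finset.add_sum_erase _ f (Finset.mem_erase.2 ⟨Ne.symm hac, Finset.mem_univ c⟩),
    ← add_assoc]

lemma chain_congr {R R' : V → V → Prop} :
    ∀ (l : List V) (c : V), List.Chain R c l →
      (∀ u v, u ∈ c :: l → v ∈ c :: l → R u v → R' u v) → List.Chain R' c l := by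
  intro l
  induction l with
  | nil => intro c _ _; exact List.Chain.nil
  | cons d l ih =>
    intro c hch hagree
    rw [List.Chain, List.chain_cons] at hch ⊢
    refine ⟨hagree c d (by simp) (by simp) hch.1, ih d hch.2 ?_⟩
    intro u v hu hv
    exact hagree u v (by simp only [List.mem_cons] at hu ⊢; tauto)
      (by simp only [List.mem_cons] at hv ⊢; tauto)

lemma chain_dedup {R : V → V → Prop} :
    ∀ (l : List V) (a : V), List.Chain R a l →
      ∃ l', List.Chain R a l' ∧ (a :: l').Nodup ∧
        (a :: l').getLast? = (a :: l).getLast? := by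
  intro l
  induction l with
  | nil => intro a _; exact ⟨[], List.Chain.nil, by simp, rfl⟩
  | cons c l ih =>
    intro a hch
    rw [List.Chain, List.chain_cons] at hch
    obtain ⟨l', hch', hnd', hlast'⟩ := ih c hch.2
    by_cases ha : a ∈ c :: l'
    · obtain ⟨s, r, hsr⟩ := List.append_of_mem ha
      have hsuf : (a :: r) <:+ (c :: l') := ⟨s, hsr.symm⟩
      refine ⟨r, ?_, ?_, ?_⟩
      · have hc' : List.Chain' R (c :: l') := hch'
        exact hc'.suffix hsuf
      · exact hnd'.sublist hsuf.sublist
      · have h1 : (a :: r).getLast? = (c :: l').getLast? := by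
          rw [hsr, List.getLast?_append_of_ne_nil s (List.cons_ne_nil _ _)]
        rw [h1, hlast', List.getLast?_cons_cons]
    · refine ⟨c :: l', List.chain_cons.2 ⟨hch.1, hch'⟩, List.nodup_cons.2 ⟨ha, hnd'⟩, ?_⟩
      rw [List.getLast?_cons_cons, List.getLast?_cons_cons, hlast']


lemma rs_parity (μH : V → V → ℕ) (t : V → ℤ)
    (hpar : ∀ v, (2:ℤ) ∣ (∑ u, (μH v u : ℤ)) - t v)
    (x : V → V → ℤ) (hx : ∀ u v, (2:ℤ) ∣ x u v + (μH u v : ℤ)) (v : V) :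
    (2:ℤ) ∣ rs x v - t v := by
  have h1 : (2:ℤ) ∣ ∑ u, (x v u + (μH v u : ℤ)) := Finset.dvd_sum fun u _ => hx v u
  rw [Finset.sum_add_distrib] at h1
  have h2 := hpar v
  unfold rs
  omega

lemma chain_step (μH : V → V → ℕ) (hsymm : ∀ u v : V, μH u v = μH v u) (t : V → ℤ)
    (hpar : ∀ v, (2:ℤ) ∣ (∑ u, (μH v u : ℤ)) - t v) :
    ∀ (l : List V) (x : V → V → ℤ), Good μH x →
      ∀ a b : V, List.Chain (fun u v => -(μH u v : ℤ) < x u v) a l → (a :: l).Nodup →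
      t a < rs x a → (a :: l).getLast? = some b → rs x b < t b →
      ∃ x', Good μH x' ∧ psi t x' < psi t x := by
  intro l
  induction l with
  | nil =>
    intro x hx a b _ _ hs hlast hd
    simp only [List.getLast?_singleton, Option.some_inj] at hlast
    subst hlast
    exact absurd hd (not_lt.2 hs.le)
  | cons c l ih =>
    intro x hx a b hch hnd hs hlast hd
    obtain ⟨hxA, hxB, hxP⟩ := hx
    have hancl : a ∉ c :: l := (List.nodup_cons.1 hnd).1
    have hac : a ≠ c := fun h => hancl (h ▸ List.mem_cons_self)
    rw [List.Chain, List.chain_cons] at hch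
    obtain ⟨hRac, hch'⟩ := hch
    have hlb : -(μH a c : ℤ) + 2 ≤ x a c := by
      have := hxP a c
      omega
    have hmsym : (μH a c : ℤ) = (μH c a : ℤ) := by exact_mod_cast hsymm a c
    set x' : V → V → ℤ := fun u v =>
      if u = a ∧ v = c then x u v - 2 else if u = c ∧ v = a then x u v + 2 else x u v
      with hx'def
    have hx'ac : x' a c = x a c - 2 := by
      simp [hx'def]
    have hx'ca : x' c a = x c a + 2 := by
      simp [hx'def, Ne.symm hac]
    have hx'other : ∀ u v, ¬(u = a ∧ v = c) → ¬(u = c ∧ v = a) → x' u v = x u v := by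
      intro u v h1 h2
      simp only [hx'def]
      rw [if_neg h1, if_neg h2]
    have hcaval : x c a = - x a c := by rw [hxA c a]
    have hgood' : Good μH x' := by
      refine ⟨?_, ?_, ?_⟩
      · intro u v
        by_cases h1 : u = a ∧ v = c
        · obtain ⟨rfl, rfl⟩ := h1
          rw [hx'ac, hx'ca, hcaval]
          ring
        · by_cases h2 : u = c ∧ v = a
          · obtain ⟨rfl, rfl⟩ := h2
            rw [hx'ca, hx'ac, hcaval]
            ring
          · rw [hx'other u v h1 h2, hx'other v u (fun h => h2 ⟨h.2, h.1⟩)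
              (fun h => h1 ⟨h.2, h.1⟩), hxA u v]
      · intro u v
        by_cases h1 : u = a ∧ v = c
        · obtain ⟨rfl, rfl⟩ := h1
          rw [hx'ac]
          have := (hxB u v).2
          constructor <;> omega
        · by_cases h2 : u = c ∧ v = a
          · obtain ⟨rfl, rfl⟩ := h2
            rw [hx'ca]
            have := (hxB u v).1
            constructor
            · omega
            · rw [hcaval]
              omega
          · rw [hx'other u v h1 h2]
            exact hxB u v
      · intro u v
        by_cases h1 : u = a ∧ v = c
        · obtain ⟨rfl, rfl⟩ := h1
          rw [hx'ac]
          have := hxP u v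
          omega
        · by_cases h2 : u = c ∧ v = a
          · obtain ⟨rfl, rfl⟩ := h2
            rw [hx'ca]
            have := hxP u v
            omega
          · rw [hx'other u v h1 h2]
            exact hxP u v
    have hrs_a : rs x' a = rs x a - 2 := by
      unfold rs
      have hterm : ∀ u, x' a u = x a u + (if u = c then -2 else 0) := by
        intro u
        by_cases hu : u = c
        · subst hu
          rw [hx'ac, if_pos rfl]
          ring
        · rw [hx'other a u (fun h => hu h.2) (fun h => hac h.1)]
          simp [hu]
      rw [Finset.sum_congr rfl fun u _ => hterm u, Finset.sum_add_distrib]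
      simp
      ring
    have hrs_c : rs x' c = rs x c + 2 := by
      unfold rs
      have hterm : ∀ u, x' c u = x c u + (if u = a then 2 else 0) := by
        intro u
        by_cases hu : u = a
        · subst hu
          rw [hx'ca]
          simp
        · rw [hx'other c u (fun h => hac h.1.symm) (fun h => hu h.2)]
          simp [hu]
      rw [Finset.sum_congr rfl fun u _ => hterm u, Finset.sum_add_distrib]
      simp
    have hrs_other : ∀ v, v ≠ a → v ≠ c → rs x' v = rs x v := by
      intro v hva hvc
      unfold rs
      exact Finset.sum_congr rfl fun u _ =>
        hx'other v u (fun h => hva h.1) (fun h => hvc h.1)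
    have hdva := rs_parity μH t hpar x hxP a
    have hdvc := rs_parity μH t hpar x hxP c
    have hrest : ∑ v ∈ (Finset.univ.erase a).erase c, (rs x' v - t v).natAbs
        = ∑ v ∈ (Finset.univ.erase a).erase c, (rs x v - t v).natAbs := by
      refine Finset.sum_congr rfl fun v hv => ?_
      have h1 : v ≠ c := (Finset.mem_erase.1 hv).1
      have h2 : v ≠ a := (Finset.mem_erase.1 (Finset.mem_erase.1 hv).2).1
      rw [hrs_other v h2 h1]
    have hpsix : psi t x = (rs x a - t a).natAbs + (rs x c - t c).natAbs
        + ∑ v ∈ (Finset.univ.erase a).erase c, (rs x v - t v).natAbs :=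
      psi_split _ a c hac
    have hpsix' : psi t x' = (rs x' a - t a).natAbs + (rs x' c - t c).natAbs
        + ∑ v ∈ (Finset.univ.erase a).erase c, (rs x' v - t v).natAbs :=
      psi_split _ a c hac
    by_cases hc : rs x c < t c
    · refine ⟨x', hgood', ?_⟩
      rw [hpsix, hpsix', hrest, hrs_a, hrs_c]
      omega
    · push_neg at hc
      have hsc : t c < rs x' c := by
        rw [hrs_c]
        omega
      have hpsieq : psi t x' = psi t x := by
        rw [hpsix, hpsix', hrest, hrs_a, hrs_c]
        omega
      have hlast2 : (c :: l).getLast? = some b := by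
        rwa [List.getLast?_cons_cons] at hlast
      have hbmem : b ∈ c :: l := List.mem_of_getLast? hlast2
      have hbne_a : b ≠ a := fun h => hancl (h ▸ hbmem)
      have hbne_c : b ≠ c := fun h => absurd (h ▸ hd) (not_lt.2 hc)
      have hdb' : rs x' b < t b := by
        rw [hrs_other b hbne_a hbne_c]
        exact hd
      have hch'' : List.Chain (fun u v => -(μH u v : ℤ) < x' u v) c l := by
        refine chain_congr l c hch' fun u v hu hv hRuv => ?_
        rwa [hx'other u v (fun h => hancl (h.1 ▸ hu)) (fun h => hancl (h.2 ▸ hv))]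
      obtain ⟨x'', hg'', hlt''⟩ := ih x' hgood' c b hch'' (List.nodup_cons.1 hnd).2
        hsc hlast2 hdb'
      exact ⟨x'', hg'', by omega⟩

lemma psi_step (μH : V → V → ℕ) (hsymm : ∀ u v : V, μH u v = μH v u) (t : V → ℤ)
    (ht : ∑ v, t v = 0)
    (hpar : ∀ v, (2:ℤ) ∣ (∑ u, (μH v u : ℤ)) - t v)
    (y : V → V → ℤ) (hyA : ∀ u v, y u v = - y v u) (hyb : ∀ u v, -(μH u v : ℤ) ≤ y u v)
    (hyr : ∀ v, rs y v = t v)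
    (x : V → V → ℤ) (hx : Good μH x) (hne : psi t x ≠ 0) :
    ∃ x', Good μH x' ∧ psi t x' < psi t x := by
  have hsum : ∑ v, (rs x v - t v) = 0 := by
    rw [Finset.sum_sub_distrib, ht, sub_zero]
    exact sum_sum_zero x hx.1 Finset.univ
  have hex : ∃ a, t a < rs x a := by
    by_contra hno
    push_neg at hno
    have hvex : ∃ v, rs x v ≠ t v := by
      by_contra hall
      push_neg at hall
      refine hne ?_
      unfold psi
      exact Finset.sum_eq_zero fun v _ => by simp [hall v]
    obtain ⟨v0, hv0⟩ := hvex
    have hv0' : rs x v0 - t v0 < 0 := by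
      have := hno v0
      omega
    have hlt : ∑ v, (rs x v - t v) < ∑ _v : V, (0:ℤ) :=
      Finset.sum_lt_sum (fun v _ => by have := hno v; omega)
        ⟨v0, Finset.mem_univ v0, by omega⟩
    rw [Finset.sum_const, smul_zero] at hlt
    omega
  obtain ⟨a, ha⟩ := hex
  obtain ⟨b, hreach, hb⟩ := exists_deficit μH t y hyA hyb hyr x hx.1 a ha
  obtain ⟨l, hch, hlast⟩ := List.exists_isChain_cons_of_relationReflTransGen hreach
  obtain ⟨l', hch', hnd', hlast'⟩ := chain_dedup l a hch
  have hlast2 : (a :: l').getLast? = some b := by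
    rw [hlast', List.getLast?_eq_getLast_of_ne_nil (List.cons_ne_nil _ _), hlast]
  exact chain_step μH hsymm t hpar l' x hx a b hch' hnd' ha hlast2 hb

lemma exists_x (μH : V → V → ℕ) (hsymm : ∀ u v : V, μH u v = μH v u)
    (hirrefl : ∀ v : V, μH v v = 0) (t : V → ℤ) (ht : ∑ v, t v = 0)
    (hpar : ∀ v, (2:ℤ) ∣ (∑ u, (μH v u : ℤ)) - t v)
    (y : V → V → ℤ) (hyA : ∀ u v, y u v = - y v u) (hyb : ∀ u v, -(μH u v : ℤ) ≤ y u v)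
    (hyr : ∀ v, rs y v = t v) :
    ∃ x, Good μH x ∧ ∀ v, rs x v = t v := by
  classical
  let e := Fintype.equivFin V
  set x₀ : V → V → ℤ := fun u v => if e u ≤ e v then -(μH u v : ℤ) else (μH u v : ℤ)
    with hx0
  have hx₀ : Good μH x₀ := by
    refine ⟨?_, ?_, ?_⟩
    · intro u v
      by_cases h : u = v
      · subst h
        simp [hx0, hirrefl u]
      · have hne : e u ≠ e v := fun hh => h (e.injective hh)
        by_cases hle : e u ≤ e v
        · have h2 : ¬ (e v ≤ e u) := fun hh => hne (le_antisymm hle hh)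
          simp [hx0, hle, h2, hsymm u v]
        · have h2 : e v ≤ e u := le_of_not_ge hle
          simp [hx0, hle, h2, hsymm u v]
    · intro u v
      by_cases hle : e u ≤ e v <;> simp [hx0, hle] <;> constructor <;> omega
    · intro u v
      by_cases hle : e u ≤ e v <;> simp [hx0, hle] <;> omega
  have main : ∀ n (x : V → V → ℤ), Good μH x → psi t x ≤ n →
      ∃ x', Good μH x' ∧ psi t x' = 0 := by
    intro n
    induction n with
    | zero => exact fun x hx hle => ⟨x, hx, Nat.le_zero.1 hle⟩
    | succ n ihn =>
      intro x hx hle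
      by_cases h0 : psi t x = 0
      · exact ⟨x, hx, h0⟩
      · obtain ⟨x', hx', hlt⟩ := psi_step μH hsymm t ht hpar y hyA hyb hyr x hx h0
        exact ihn x' hx' (by omega)
  obtain ⟨x, hx, h0⟩ := main (psi t x₀) x₀ hx₀ le_rfl
  refine ⟨x, hx, fun v => ?_⟩
  unfold psi at h0
  have := (Finset.sum_eq_zero_iff.1 h0) v (Finset.mem_univ v)
  omega


theorem t_balanced_orientation_iff (μH : V → V → ℕ)
    (hsymm : ∀ u v : V, μH u v = μH v u) (hirrefl : ∀ v : V, μH v v = 0)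
    (t : V → ℤ) (ht : ∑ v, t v = 0) :
    (∃ μD : V → V → ℕ, (∀ u v : V, μD u v + μD v u = μH u v) ∧
        (∀ v, (outDeg μD v : ℤ) - (inDeg μD v : ℤ) = t v)) ↔
    ((∃ μT : V → V → ℕ, IsTRoad μH t μT) ∧ ∀ v : V, Even ((degH μH v : ℤ) - t v)) := by
  constructor
  · rintro ⟨μD, hD1, hD2⟩
    refine ⟨⟨μD, fun u v => le_of_eq (hD1 u v), hD2⟩, fun v => ?_⟩
    have hdeg : (degH μH v : ℤ) = (outDeg μD v : ℤ) + (inDeg μD v : ℤ) := by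
      unfold degH outDeg inDeg
      push_cast
      rw [← Finset.sum_add_distrib]
      refine Finset.sum_congr rfl fun u _ => ?_
      exact_mod_cast (hD1 v u).symm
    exact ⟨(inDeg μD v : ℤ), by rw [hdeg, ← hD2 v]; ring⟩
  · rintro ⟨⟨μT, hT1, hT2⟩, hEven⟩
    set y : V → V → ℤ := fun u v => (μT u v : ℤ) - (μT v u : ℤ) with hydef
    have hyA : ∀ u v, y u v = - y v u := fun u v => by simp only [hydef]; ring
    have hyb : ∀ u v, -(μH u v : ℤ) ≤ y u v := by
      intro u v
      have h := hT1 u v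
      simp only [hydef]
      omega
    have hyr : ∀ v, rs y v = t v := by
      intro v
      have h := hT2 v
      unfold outDeg inDeg at h
      unfold rs
      simp only [hydef]
      rw [Finset.sum_sub_distrib]
      push_cast at h ⊢
      exact h
    have hpar : ∀ v, (2:ℤ) ∣ (∑ u, (μH v u : ℤ)) - t v := by
      intro v
      have h := hEven v
      unfold degH at h
      push_cast at h
      exact h.two_dvd
    obtain ⟨x, ⟨hxA, hxB, hxP⟩, hxr⟩ := exists_x μH hsymm hirrefl t ht hpar y hyA hyb hyr
    refine ⟨fun u v => (((μH u v : ℤ) + x u v) / 2).toNat, ?_, ?_⟩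
    all_goals {
      have hcast : ∀ u v, ((((μH u v : ℤ) + x u v) / 2).toNat : ℤ)
          = ((μH u v : ℤ) + x u v) / 2 := by
        intro u v
        refine Int.toNat_of_nonneg (Int.ediv_nonneg ?_ (by norm_num))
        have := (hxB u v).1
        omega
      first
      | · intro u v
          have h2 : (2:ℤ) ∣ x u v + (μH u v : ℤ) := hxP u v
          have hm : (μH u v : ℤ) = (μH v u : ℤ) := by exact_mod_cast hsymm u v
          have ha := hxA u v
          have : ((((μH u v : ℤ) + x u v) / 2).toNat
              + (((μH v u : ℤ) + x v u) / 2).toNat : ℤ) = (μH u v : ℤ) := by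
            push_cast [hcast u v, hcast v u]
            omega
          exact_mod_cast this
      | · intro v
          have key : (outDeg (fun u v => (((μH u v : ℤ) + x u v) / 2).toNat) v : ℤ)
              - (inDeg (fun u v => (((μH u v : ℤ) + x u v) / 2).toNat) v : ℤ)
              = ∑ u, x v u := by
            unfold outDeg inDeg
            push_cast
            rw [← Finset.sum_sub_distrib]
            refine Finset.sum_congr rfl fun u _ => ?_
            rw [hcast v u, hcast u v]
            have h2 := hxP v u
            have ha := hxA v u
            have hm : (μH v u : ℤ) = (μH u v : ℤ) := by exact_mod_cast hsymm v u
            omega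
          rw [key]
          exact hxr v
    }


end Stmt2
end

section
/- Let (G,w,t) be an instance of BCPP that admits at least one t-balanced multi-orientation. Let H be an undirected multigraph of minimum weight among all undirected multigraphs whose underlying simple graph is G (i.e. μ_H({u,v}) ≥ 1 exactly when uv ∈ E and μ_H({u,v}) = 0 otherwise), which have a t-road, and in which d_H(v) − t(v) is even for every vertex v. Then some orientation of H (a directed multigraph D with μ_D(u,v) + μ_D(v,u) = μ_H({u,v}) for all u,v) is a t-balanced multi-orientation of G of minimum weight. -/
/-!
Statement 3: Let `(G,w,t)` be an instance of BCPP that admits at least one `t`-balanced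
multi-orientation.  Let `H` be an undirected multigraph of minimum weight among all
undirected multigraphs whose underlying simple graph is `G`, which have a `t`-road, and in
which `d_H(v) − t(v)` is even for every vertex `v`.  Then some orientation of `H` is a
`t`-balanced multi-orientation of `G` of minimum weight.
-/

namespace Stmt3

variable {V : Type*} [Fintype V] [DecidableEq V]

/-- Out-degree of `v` in the directed multigraph with multiplicity function `μ`. -/
def outDeg (μ : V → V → ℕ) (v : V) : ℕ := ∑ u, μ v u

/-- In-degree of `v` in the directed multigraph with multiplicity function `μ`. -/
def inDeg (μ : V → V → ℕ) (v : V) : ℕ := ∑ u, μ u v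

/-- `μ` is `t`-balanced: `d⁺(v) − d⁻(v) = t(v)` for every vertex `v`. -/
def TBalanced (t : V → ℤ) (μ : V → V → ℕ) : Prop :=
  ∀ v, (outDeg μ v : ℤ) - (inDeg μ v : ℤ) = t v

/-- `μ` is a multi-orientation of the simple undirected graph `G`. -/
def IsMultiOrientation (G : SimpleGraph V) (μ : V → V → ℕ) : Prop :=
  (∀ u v : V, G.Adj u v → 1 ≤ μ u v + μ v u) ∧
  (∀ u v : V, ¬ G.Adj u v → μ u v = 0)

/-- A `t`-road of the undirected multigraph `μH`. -/
def IsTRoad (μH : V → V → ℕ) (t : V → ℤ) (μT : V → V → ℕ) : Prop :=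
  (∀ u v : V, μT u v + μT v u ≤ μH u v) ∧
  (∀ v, (outDeg μT v : ℤ) - (inDeg μT v : ℤ) = t v)

/-- The weight of a (directed or undirected) multigraph with multiplicity function `μ`, with
respect to edge weights `w : Sym2 V → ℕ` (each unordered pair is counted in both orders). -/
def weightFn (w : Sym2 V → ℕ) (μ : V → V → ℕ) : ℕ := ∑ u, ∑ v, μ u v * w s(u, v)

/-- The conditions on the multigraph `H` of Corollary 5: the underlying simple graph of `H`
is `G`, `H` has a `t`-road, and `d_H(v) − t(v)` is even for every vertex `v`. -/
def GoodMultigraph (G : SimpleGraph V) (t : V → ℤ) (μH : V → V → ℕ) : Prop :=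
  (∀ u v : V, μH u v = μH v u) ∧
  (∀ u v : V, 1 ≤ μH u v ↔ G.Adj u v) ∧
  (∃ μT : V → V → ℕ, IsTRoad μH t μT) ∧
  (∀ v : V, Even ((∑ u, μH v u : ℤ) - t v))


set_option linter.unusedSectionVars false

def e (p q : V) : V → V → ℕ := fun x y => if x = p ∧ y = q then 1 else 0

lemma outDeg_e (p q x : V) : outDeg (e p q) x = if x = p then 1 else 0 := by
  by_cases h : x = p <;> simp [outDeg, e, h, Finset.sum_ite_eq']

lemma inDeg_e (p q x : V) : inDeg (e p q) x = if x = q then 1 else 0 := by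
  by_cases h : x = q <;> simp [inDeg, e, h, Finset.sum_ite_eq']

lemma sum_ind (p : V) : (∑ x : V, if x = p then 1 else 0) = 1 := by
  simp [Finset.sum_ite_eq']

lemma e_symm (p q x y : V) : e p q x y = e q p y x := by
  simp [e, and_comm]

lemma e_diag (p q : V) (h : p ≠ q) (x : V) : e p q x x = 0 := by
  simp only [e, ite_eq_right_iff]
  rintro ⟨rfl, rfl⟩
  exact absurd rfl h

/-- Eulerian orientation of an even symmetric multigraph. -/
lemma euler_orient : ∀ N : ℕ, ∀ μ : V → V → ℕ,
    (∀ u v, μ u v = μ v u) → (∀ v, μ v v = 0) →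
    (∀ v, Even (outDeg μ v)) → (∑ v, outDeg μ v = N) →
    ∃ ν : V → V → ℕ, (∀ u v, ν u v + ν v u = μ u v) ∧ (∀ v, outDeg ν v = inDeg ν v) := by
  intro N
  induction N using Nat.strong_induction_on with
  | _ N ih =>
  intro μ hsym hdiag heven htot
  by_cases h0 : ∀ u v, μ u v = 0
  · exact ⟨fun _ _ => 0, fun u v => by simp [h0], fun v => by simp [outDeg, inDeg]⟩
  push_neg at h0
  obtain ⟨v, a, hva0⟩ := h0
  have hva : 1 ≤ μ v a := Nat.one_le_iff_ne_zero.mpr hva0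
  have hav : v ≠ a := by rintro rfl; exact hva0 (hdiag v)
  have hμav : μ a v = μ v a := hsym a v
  by_cases h2 : 2 ≤ μ v a
  · -- Case 1: a double edge v-a; orient one copy each way, recurse on the rest.
    set c : V → V → ℕ := fun x y => 2 * e v a x y + 2 * e a v x y with hc
    have hcle : ∀ x y, c x y ≤ μ x y := by
      intro x y
      rcases eq_or_ne x v with hxv | hxv
      · rcases eq_or_ne y a with hya | hya
        · rw [hxv, hya]
          have hne : ¬(v = a ∧ a = v) := fun h => hav h.1
          simp [hc, e, hne]; omega
        · simp [hc, e, hya, hav, hxv]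
      · rcases eq_or_ne x a with hxa | hxa
        · rcases eq_or_ne y v with hyv | hyv
          · rw [hxa, hyv]
            have hne : ¬(a = v ∧ v = a) := fun h => hav h.2
            simp [hc, e, hne]; omega
          · simp [hc, e, hxv, hyv]
        · simp [hc, e, hxv, hxa]
    set μ' : V → V → ℕ := fun x y => μ x y - c x y with hμ'
    have hadd : ∀ x y, μ' x y + c x y = μ x y := by
      intro x y
      have := hcle x y
      simp only [hμ', hc] at *
      omega
    have hdego : ∀ x, outDeg μ' x + (2 * (if x = v then 1 else 0) + 2 * (if x = a then 1 else 0))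
        = outDeg μ x := by
      intro x
      have h1 : outDeg μ' x + outDeg c x = outDeg μ x := by
        simp only [outDeg, ← Finset.sum_add_distrib]
        exact Finset.sum_congr rfl fun u _ => hadd x u
      have h2 : outDeg c x = 2 * (if x = v then 1 else 0) + 2 * (if x = a then 1 else 0) := by
        have hva' := outDeg_e v a x
        have hav' := outDeg_e a v x
        simp only [outDeg] at hva' hav' ⊢
        simp only [hc, Finset.sum_add_distrib, ← Finset.mul_sum, hva', hav']
      omega
    have hsym' : ∀ u w, μ' u w = μ' w u := by
      intro u w
      have h1 := hadd u w
      have h2 := hadd w u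
      have h3 := hsym u w
      have hcs : c u w = c w u := by
        simp only [hc]
        rw [e_symm v a u w, e_symm a v u w]
        omega
      omega
    have hdiag' : ∀ x, μ' x x = 0 := by
      intro x
      have h1 := hadd x x
      have h2 := hdiag x
      have hc0 : c x x = 0 := by simp [hc, e_diag v a hav, e_diag a v (Ne.symm hav)]
      omega
    have heven' : ∀ x, Even (outDeg μ' x) := by
      intro x
      have h1 := hdego x
      have h2 := heven x
      rw [Nat.even_iff] at h2 ⊢
      omega
    have htot' : (∑ x, outDeg μ' x) + 4 = N := by
      have h1 : (∑ x, (outDeg μ' x + (2 * (if x = v then 1 else 0) + 2 * (if x = a then 1 else 0))))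
          = ∑ x, outDeg μ x := Finset.sum_congr rfl fun x _ => hdego x
      rw [Finset.sum_add_distrib, Finset.sum_add_distrib, ← Finset.mul_sum, ← Finset.mul_sum,
        sum_ind, sum_ind, htot] at h1
      omega
    obtain ⟨ν', hp', hb'⟩ := ih (∑ x, outDeg μ' x) (by omega) μ' hsym' hdiag' heven' rfl
    refine ⟨fun x y => ν' x y + e v a x y + e a v x y, ?_, ?_⟩
    · intro u w
      show ν' u w + e v a u w + e a v u w + (ν' w u + e v a w u + e a v w u) = μ u w
      have h1 := hp' u w
      have h2 := hadd u w
      have h3 := e_symm v a w u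
      have h4 := e_symm a v w u
      simp only [hc] at h2
      omega
    · intro x
      have ho : outDeg (fun x y => ν' x y + e v a x y + e a v x y) x
          = outDeg ν' x + outDeg (e v a) x + outDeg (e a v) x := by
        simp [outDeg, Finset.sum_add_distrib]
      have hi : inDeg (fun x y => ν' x y + e v a x y + e a v x y) x
          = inDeg ν' x + inDeg (e v a) x + inDeg (e a v) x := by
        simp [inDeg, Finset.sum_add_distrib]
      rw [ho, hi, outDeg_e, outDeg_e, inDeg_e, inDeg_e, hb' x]
      omega
  · -- Case 2: μ v a = 1; find a second neighbour b and split off.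
    have h1a : μ v a = 1 := by omega
    have hbex : ∃ b, b ≠ a ∧ μ v b ≠ 0 := by
      by_contra hnb
      push_neg at hnb
      have hdeg : outDeg μ v = μ v a :=
        Finset.sum_eq_single a (fun b _ hba => hnb b hba) (fun h => absurd (Finset.mem_univ a) h)
      have he := heven v
      rw [Nat.even_iff] at he
      omega
    obtain ⟨b, hba, hvb0⟩ := hbex
    have hvb : 1 ≤ μ v b := Nat.one_le_iff_ne_zero.mpr hvb0
    have hbv : b ≠ v := by
      intro h
      rw [h] at hvb0
      exact hvb0 (hdiag v)
    have hvb' : v ≠ b := Ne.symm hbv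
    have hab : a ≠ b := fun h => hba h.symm
    have hav' : a ≠ v := Ne.symm hav
    have hμbv : μ b v = μ v b := hsym b v
    set c : V → V → ℕ := fun x y => e v a x y + e a v x y + e v b x y + e b v x y with hc
    set d : V → V → ℕ := fun x y => e a b x y + e b a x y with hd
    have hcle : ∀ x y, c x y ≤ μ x y := by
      intro x y
      rcases eq_or_ne x v with hxv | hxv
      · rcases eq_or_ne y a with hya | hya
        · rw [hxv, hya]
          simp [hc, e, hav, hab, hvb']
          omega
        · rcases eq_or_ne y b with hyb | hyb
          · rw [hxv, hyb]
            simp [hc, e, hav, hab, hvb', hba]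
            omega
          · rw [hxv]
            simp [hc, e, hya, hyb, hav, hvb']
      · rcases eq_or_ne y v with hyv | hyv
        · rcases eq_or_ne x a with hxa | hxa
          · rw [hxa, hyv]
            simp [hc, e, hav', hba, hab]
            omega
          · rcases eq_or_ne x b with hxb | hxb
            · rw [hxb, hyv]
              simp [hc, e, hbv, hba, hab]
              omega
            · simp [hc, e, hxv, hxa, hxb]
        · simp [hc, e, hxv, hyv]
    set μ' : V → V → ℕ := fun x y => μ x y + d x y - c x y with hμ'
    have hadd : ∀ x y, μ' x y + c x y = μ x y + d x y := by
      intro x y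
      have := hcle x y
      simp only [hμ', hc, hd] at *
      omega
    have hdego : ∀ x, outDeg μ' x +
        ((if x = v then 1 else 0) + (if x = a then 1 else 0) + (if x = v then 1 else 0)
            + (if x = b then 1 else 0))
        = outDeg μ x + ((if x = a then 1 else 0) + (if x = b then 1 else 0)) := by
      intro x
      have h1 : outDeg μ' x + outDeg c x = outDeg μ x + outDeg d x := by
        simp only [outDeg, ← Finset.sum_add_distrib]
        exact Finset.sum_congr rfl fun u _ => hadd x u
      have hcdeg : outDeg c x = (if x = v then 1 else 0) + (if x = a then 1 else 0)
          + (if x = v then 1 else 0) + (if x = b then 1 else 0) := by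
        have t1 := outDeg_e v a x
        have t2 := outDeg_e a v x
        have t3 := outDeg_e v b x
        have t4 := outDeg_e b v x
        simp only [outDeg] at t1 t2 t3 t4 ⊢
        simp only [hc, Finset.sum_add_distrib, t1, t2, t3, t4]
      have hddeg : outDeg d x = (if x = a then 1 else 0) + (if x = b then 1 else 0) := by
        have t1 := outDeg_e a b x
        have t2 := outDeg_e b a x
        simp only [outDeg] at t1 t2 ⊢
        simp only [hd, Finset.sum_add_distrib, t1, t2]
      omega
    have hsym' : ∀ u w, μ' u w = μ' w u := by
      intro u w
      have h1 := hadd u w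
      have h2 := hadd w u
      have h3 := hsym u w
      have hcs : c u w = c w u := by
        simp only [hc]
        rw [e_symm v a u w, e_symm a v u w, e_symm v b u w, e_symm b v u w]
        omega
      have hds : d u w = d w u := by
        simp only [hd]
        rw [e_symm a b u w, e_symm b a u w]
        omega
      omega
    have hdiag' : ∀ x, μ' x x = 0 := by
      intro x
      have h1 := hadd x x
      have h2 := hdiag x
      have hc0 : c x x = 0 := by
        simp [hc, e_diag v a hav, e_diag a v hav', e_diag v b hvb', e_diag b v hbv]
      have hd0 : d x x = 0 := by
        simp [hd, e_diag a b hab, e_diag b a (Ne.symm hab)]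
      omega
    have heven' : ∀ x, Even (outDeg μ' x) := by
      intro x
      have h1 := hdego x
      have h2 := heven x
      rw [Nat.even_iff] at h2 ⊢
      omega
    have htot' : (∑ x, outDeg μ' x) + 4 = N + 2 := by
      have h1 : (∑ x, (outDeg μ' x +
          ((if x = v then 1 else 0) + (if x = a then 1 else 0) + (if x = v then 1 else 0)
            + (if x = b then 1 else 0))))
          = ∑ x, (outDeg μ x + ((if x = a then 1 else 0) + (if x = b then 1 else 0))) :=
        Finset.sum_congr rfl fun x _ => hdego x
      simp only [Finset.sum_add_distrib, sum_ind, htot] at h1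
      omega
    obtain ⟨ν', hp', hb'⟩ := ih (∑ x, outDeg μ' x) (by omega) μ' hsym' hdiag' heven' rfl
    have hμ'ab : μ' a b = μ a b + 1 := by
      have h1 := hadd a b
      have hc0 : c a b = 0 := by simp [hc, e, hav', hbv, hab]
      have hd1 : d a b = 1 := by simp [hd, e, hab]
      omega
    have hν'ab : 1 ≤ ν' a b + ν' b a := by
      have := hp' a b
      omega
    by_cases hcase : 1 ≤ ν' a b
    · -- replace an a→b arc by a→v, v→b
      have hsub : ∀ x y, e a b x y ≤ ν' x y := by
        intro x y
        rcases eq_or_ne x a with hxa | hxa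
        · rcases eq_or_ne y b with hyb | hyb
          · rw [hxa, hyb]
            simp [e]
            omega
          · simp [e, hyb]
        · simp [e, hxa]
      have hptw : ∀ x u, (ν' x u - e a b x u + e a v x u + e v b x u) + e a b x u
          = ν' x u + e a v x u + e v b x u := fun x u => by have := hsub x u; omega
      refine ⟨fun x y => ν' x y - e a b x y + e a v x y + e v b x y, ?_, ?_⟩
      · intro u w
        show ν' u w - e a b u w + e a v u w + e v b u w
            + (ν' w u - e a b w u + e a v w u + e v b w u) = μ u w
        have h1 := hp' u w
        have h2 := hadd u w
        have h3 := e_symm v a u w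
        have h4 := e_symm b v u w
        have h5 := e_symm b a u w
        have h6 := hsub u w
        have h7 := hsub w u
        simp only [hc, hd] at h2
        omega
      · intro x
        have ho : outDeg (fun x y => ν' x y - e a b x y + e a v x y + e v b x y) x
            + outDeg (e a b) x
            = outDeg ν' x + outDeg (e a v) x + outDeg (e v b) x := by
          simp only [outDeg, ← Finset.sum_add_distrib]
          exact Finset.sum_congr rfl fun u _ => hptw x u
        have hi : inDeg (fun x y => ν' x y - e a b x y + e a v x y + e v b x y) x
            + inDeg (e a b) x
            = inDeg ν' x + inDeg (e a v) x + inDeg (e v b) x := by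
          simp only [inDeg, ← Finset.sum_add_distrib]
          exact Finset.sum_congr rfl fun u _ => hptw u x
        rw [outDeg_e, outDeg_e, outDeg_e] at ho
        rw [inDeg_e, inDeg_e, inDeg_e] at hi
        have hbx := hb' x
        omega
    · -- replace a b→a arc by b→v, v→a
      have hcase' : 1 ≤ ν' b a := by omega
      have hsub : ∀ x y, e b a x y ≤ ν' x y := by
        intro x y
        rcases eq_or_ne x b with hxb | hxb
        · rcases eq_or_ne y a with hya | hya
          · rw [hxb, hya]
            simp [e]
            omega
          · simp [e, hya]
        · simp [e, hxb]
      have hptw : ∀ x u, (ν' x u - e b a x u + e b v x u + e v a x u) + e b a x u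
          = ν' x u + e b v x u + e v a x u := fun x u => by have := hsub x u; omega
      refine ⟨fun x y => ν' x y - e b a x y + e b v x y + e v a x y, ?_, ?_⟩
      · intro u w
        show ν' u w - e b a u w + e b v u w + e v a u w
            + (ν' w u - e b a w u + e b v w u + e v a w u) = μ u w
        have h1 := hp' u w
        have h2 := hadd u w
        have h3 := e_symm a v u w
        have h4 := e_symm v b u w
        have h5 := e_symm a b u w
        have h6 := hsub u w
        have h7 := hsub w u
        simp only [hc, hd] at h2
        omega
      · intro x
        have ho : outDeg (fun x y => ν' x y - e b a x y + e b v x y + e v a x y) x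
            + outDeg (e b a) x
            = outDeg ν' x + outDeg (e b v) x + outDeg (e v a) x := by
          simp only [outDeg, ← Finset.sum_add_distrib]
          exact Finset.sum_congr rfl fun u _ => hptw x u
        have hi : inDeg (fun x y => ν' x y - e b a x y + e b v x y + e v a x y) x
            + inDeg (e b a) x
            = inDeg ν' x + inDeg (e b v) x + inDeg (e v a) x := by
          simp only [inDeg, ← Finset.sum_add_distrib]
          exact Finset.sum_congr rfl fun u _ => hptw u x
        rw [outDeg_e, outDeg_e, outDeg_e] at ho
        rw [inDeg_e, inDeg_e, inDeg_e] at hi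
        have hbx := hb' x
        omega


lemma weight_swap (w : Sym2 V → ℕ) (f : V → V → ℕ) :
    (∑ u, ∑ v, f v u * w s(u, v)) = weightFn w f := by
  rw [Finset.sum_comm]
  exact Finset.sum_congr rfl fun a _ => Finset.sum_congr rfl fun b _ => by rw [Sym2.eq_swap]

lemma weight_double (w : Sym2 V → ℕ) (f g : V → V → ℕ) (h : ∀ u v, f u v + f v u = g u v) :
    weightFn w g = weightFn w f + weightFn w f := by
  have h1 : ∀ u v : V, g u v * w s(u, v) = f u v * w s(u, v) + f v u * w s(u, v) := by
    intro u v
    rw [← h u v, add_mul]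
  calc weightFn w g = ∑ u, ∑ v, (f u v * w s(u, v) + f v u * w s(u, v)) :=
        Finset.sum_congr rfl fun u _ => Finset.sum_congr rfl fun v _ => h1 u v
    _ = weightFn w f + ∑ u, ∑ v, f v u * w s(u, v) := by
        unfold weightFn
        simp [Finset.sum_add_distrib]
    _ = weightFn w f + weightFn w f := by rw [weight_swap]


theorem exists_optimal_orientation (G : SimpleGraph V) (w : Sym2 V → ℕ) (t : V → ℤ)
    (ht : ∑ v, t v = 0)
    (hexists : ∃ μ : V → V → ℕ, IsMultiOrientation G μ ∧ TBalanced t μ)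
    (μH : V → V → ℕ)
    (hH : GoodMultigraph G t μH)
    (hHmin : ∀ μH' : V → V → ℕ, GoodMultigraph G t μH' → weightFn w μH ≤ weightFn w μH') :
    ∃ μD : V → V → ℕ, (∀ u v : V, μD u v + μD v u = μH u v) ∧
      IsMultiOrientation G μD ∧ TBalanced t μD ∧
      (∀ μD' : V → V → ℕ, IsMultiOrientation G μD' → TBalanced t μD' →
        weightFn w μD ≤ weightFn w μD') := by
  obtain ⟨hsymH, hadjH, ⟨μT, hroad⟩, hevenH⟩ := hH
  set μR : V → V → ℕ := fun x y => μH x y - (μT x y + μT y x) with hμR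
  have haddR : ∀ x y, μR x y + (μT x y + μT y x) = μH x y := by
    intro x y
    have := hroad.1 x y
    simp only [hμR]
    omega
  have hdiagH : ∀ x, μH x x = 0 := by
    intro x
    have : ¬ (1 ≤ μH x x) := fun h => G.irrefl ((hadjH x x).mp h)
    omega
  have hsymR : ∀ u w, μR u w = μR w u := by
    intro u w
    have h1 := haddR u w
    have h2 := haddR w u
    have h3 := hsymH u w
    omega
  have hdiagR : ∀ x, μR x x = 0 := by
    intro x
    have h1 := haddR x x
    have h2 := hdiagH x
    omega
  have hevenR : ∀ x, Even (outDeg μR x) := by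
    intro x
    have hsum : outDeg μR x + (outDeg μT x + inDeg μT x) = ∑ u, μH x u := by
      simp only [outDeg, inDeg, ← Finset.sum_add_distrib]
      exact Finset.sum_congr rfl fun u _ => haddR x u
    have hgood := hevenH x
    rw [Int.even_iff] at hgood
    rw [Nat.even_iff]
    have hbal := hroad.2 x
    have hcast : (∑ u, (μH x u : ℤ)) = ((∑ u, μH x u : ℕ) : ℤ) := by push_cast; ring
    simp only [outDeg, inDeg] at hbal hsum ⊢
    omega
  obtain ⟨ν, hνp, hνb⟩ := euler_orient (∑ x, outDeg μR x) μR hsymR hdiagR hevenR rfl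
  have hpair : ∀ u v, (μT u v + ν u v) + (μT v u + ν v u) = μH u v := by
    intro u v
    have h1 := hνp u v
    have h2 := haddR u v
    omega
  refine ⟨fun x y => μT x y + ν x y, hpair, ⟨?_, ?_⟩, ?_, ?_⟩
  · intro u v hadj
    have h3 := (hadjH u v).mpr hadj
    have h1 := hpair u v
    show 1 ≤ μT u v + ν u v + (μT v u + ν v u)
    omega
  · intro u v hnadj
    have h0 : μH u v = 0 := by
      have : ¬ (1 ≤ μH u v) := fun h => hnadj ((hadjH u v).mp h)
      omega
    have h1 := hpair u v
    show μT u v + ν u v = 0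
    omega
  · intro x
    have ho : outDeg (fun x y => μT x y + ν x y) x = outDeg μT x + outDeg ν x := by
      simp [outDeg, Finset.sum_add_distrib]
    have hi : inDeg (fun x y => μT x y + ν x y) x = inDeg μT x + inDeg ν x := by
      simp [inDeg, Finset.sum_add_distrib]
    have hbal := hroad.2 x
    have hb := hνb x
    rw [ho, hi]
    push_cast
    omega
  · intro μD' hMO' hTB'
    have hgood' : GoodMultigraph G t (fun x y => μD' x y + μD' y x) := by
      refine ⟨fun u v => add_comm _ _, fun u v => ⟨fun h => ?_, fun h => hMO'.1 u v h⟩,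
        ⟨μD', fun u v => le_rfl, hTB'⟩, ?_⟩
      · by_contra hn
        have h1 := hMO'.2 u v hn
        have h2 := hMO'.2 v u (fun ha => hn ha.symm)
        simp only at h
        omega
      · intro x
        show Even ((∑ u, ((μD' x u + μD' u x : ℕ) : ℤ)) - t x)
        have h1 : (∑ u, ((μD' x u + μD' u x : ℕ) : ℤ))
            = ((outDeg μD' x : ℕ) : ℤ) + ((inDeg μD' x : ℕ) : ℤ) := by
          push_cast [outDeg, inDeg]
          rw [Finset.sum_add_distrib]
        rw [h1, Int.even_iff]
        have hTB := hTB' x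
        omega
    have hmin := hHmin _ hgood'
    have hw1 : weightFn w μH = weightFn w (fun x y => μT x y + ν x y)
        + weightFn w (fun x y => μT x y + ν x y) :=
      weight_double w _ μH hpair
    have hw2 : weightFn w (fun x y => μD' x y + μD' y x) = weightFn w μD' + weightFn w μD' :=
      weight_double w μD' _ (fun u v => rfl)
    omega


end Stmt3
end

section
/- An undirected multigraph H on a finite vertex set V with demand function t : V → ℤ (Σ_v t(v) = 0) has a t-road if and only if H does not have a small t-cut. -/
set_option linter.unusedSectionVars false
set_option linter.unreachableTactic false
set_option linter.unusedTactic false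
set_option maxHeartbeats 1000000



/-!
Statement 4: An undirected multigraph `H` on a finite vertex set `V` with demand function
`t : V → ℤ` (with `Σ_v t(v) = 0`) has a `t`-road if and only if `H` does not have a small
`t`-cut.

Here `H*` is the multigraph obtained from `H` by adding two new vertices `a` and `b`, with
`t(v)` parallel edges between `a` and `v` for each `v` with `t(v) > 0`, and `−t(v)` parallel
edges between `b` and `v` for each `v` with `t(v) < 0`; and `p = Σ_{v : t(v)>0} t(v)`.
A small `t`-cut of `H` is a set `F` of edges of `H` with `F = E(H) ∩ F'` for some minimal
`(a,b)`-cut `F'` of `H*` with `|F'| < p`.  Hence `H` has a small `t`-cut iff there exists a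
minimal `(a,b)`-cut `F'` of `H*` with `|F'| < p`.

A set of edges of a multigraph is represented by a symmetric function `c` with
`c x y ≤ ν x y`, where `c x y` is the number of parallel copies of the edge `xy` belonging
to the set; its cardinality `|F'|` satisfies `2 * |F'| = Σ_x Σ_y c x y`.
-/

namespace Stmt4

variable {V : Type*} [Fintype V] [DecidableEq V]

/-- Out-degree of `v` in the directed multigraph with multiplicity function `μ`. -/
def outDeg (μ : V → V → ℕ) (v : V) : ℕ := ∑ u, μ v u

/-- In-degree of `v` in the directed multigraph with multiplicity function `μ`. -/
def inDeg (μ : V → V → ℕ) (v : V) : ℕ := ∑ u, μ u v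

/-- A `t`-road of the undirected multigraph `μH`. -/
def IsTRoad (μH : V → V → ℕ) (t : V → ℤ) (μT : V → V → ℕ) : Prop :=
  (∀ u v : V, μT u v + μT v u ≤ μH u v) ∧
  (∀ v, (outDeg μT v : ℤ) - (inDeg μT v : ℤ) = t v)

/-- The multigraph `H*` on vertex set `V ⊕ Bool`, where `Sum.inr true` plays the role of
`a` and `Sum.inr false` plays the role of `b`: it consists of `H` together with `t(v)`
parallel edges between `a` and `v` for each `v` with `t(v) > 0`, and `−t(v)` parallel edges
between `b` and `v` for each `v` with `t(v) < 0`. -/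
def auxGraph (μH : V → V → ℕ) (t : V → ℤ) : (V ⊕ Bool) → (V ⊕ Bool) → ℕ
  | Sum.inl u, Sum.inl v => μH u v
  | Sum.inl u, Sum.inr c => if c then (t u).toNat else (-t u).toNat
  | Sum.inr c, Sum.inl v => if c then (t v).toNat else (-t v).toNat
  | Sum.inr _, Sum.inr _ => 0

/-- `c` is a set of edges of the multigraph `ν` whose removal disconnects `a` from `b`:
after deleting the edges of `c`, no path from `a` to `b` remains. -/
def IsCutFn {W : Type*} (ν : W → W → ℕ) (a b : W) (c : W → W → ℕ) : Prop :=
  (∀ x y : W, c x y = c y x) ∧ (∀ x y : W, c x y ≤ ν x y) ∧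
  ¬ Relation.ReflTransGen (fun x y => c x y < ν x y) a b

/-- `c` is a minimal `(a,b)`-cut of `ν`: no proper subset of it is an `(a,b)`-cut. -/
def IsMinimalCutFn {W : Type*} (ν : W → W → ℕ) (a b : W) (c : W → W → ℕ) : Prop :=
  IsCutFn ν a b c ∧
  ∀ c' : W → W → ℕ, (∀ x y : W, c' x y ≤ c x y) → IsCutFn ν a b c' → c' = c

/-- `H` has a small `t`-cut: there is a minimal `(a,b)`-cut `F'` of `H*` with `|F'| < p`
(the size condition is stated doubled: `Σ_x Σ_y c x y = 2 |F'| < 2p`). -/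
def HasSmallTCut (μH : V → V → ℕ) (t : V → ℤ) : Prop :=
  ∃ c : (V ⊕ Bool) → (V ⊕ Bool) → ℕ,
    IsMinimalCutFn (auxGraph μH t) (Sum.inr true) (Sum.inr false) c ∧
    ((∑ x, ∑ y, c x y : ℕ) : ℤ) < 2 * ∑ v ∈ Finset.univ.filter (fun v => 0 < t v), t v


/-- n-step reachability. -/
def stepN {α : Type*} (r : α → α → Prop) : ℕ → α → α → Prop
  | 0, x, y => x = y
  | n+1, x, y => ∃ z, r x z ∧ stepN r n z y

lemma reflTransGen_iff_stepN {α : Type*} (r : α → α → Prop) (x y : α) :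
    Relation.ReflTransGen r x y ↔ ∃ n, stepN r n x y := by
  constructor
  · intro h
    induction h using Relation.ReflTransGen.head_induction_on with
    | refl => exact ⟨0, rfl⟩
    | head hr _ ih => obtain ⟨n, hn⟩ := ih; exact ⟨n+1, _, hr, hn⟩
  · rintro ⟨n, hn⟩
    induction n generalizing x with
    | zero => cases hn; exact Relation.ReflTransGen.refl
    | succ n ih =>
      obtain ⟨z, hz, hs⟩ := hn
      exact Relation.ReflTransGen.head hz (ih _ hs)

section Flow
variable {W : Type*} [Fintype W] [DecidableEq W] (ν : W → W → ℕ)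

/-- Skew-symmetric feasible flow. -/
def Feas (g : W → W → ℤ) : Prop :=
  (∀ x y, g x y = - g y x) ∧ ∀ x y, g x y ≤ ν x y

/-- Excess (net outflow) at a vertex. -/
def exc (g : W → W → ℤ) (v : W) : ℤ := ∑ u, g v u

/-- Residual relation. -/
def res (g : W → W → ℤ) (x y : W) : Prop := g x y < ν x y

/-- Push one unit along edge (x,y). -/
def push (g : W → W → ℤ) (x y : W) : W → W → ℤ :=
  fun u v => g u v + (if u = x ∧ v = y then 1 else 0) - (if u = y ∧ v = x then 1 else 0)

lemma push_feas {g : W → W → ℤ} (hg : Feas ν g) {x y : W} (hxy : res ν g x y) :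
    Feas ν (push g x y) := by
  have hr : g x y < (ν x y : ℤ) := hxy
  constructor
  · intro u v
    simp only [push]
    rw [hg.1 u v]
    have e1 : (v = y ∧ u = x) ↔ (u = x ∧ v = y) := and_comm
    have e2 : (v = x ∧ u = y) ↔ (u = y ∧ v = x) := and_comm
    simp only [e1, e2]
    ring
  · intro u v
    have h := hg.2 u v
    simp only [push]
    split_ifs with h1 h2 h2
    · obtain ⟨rfl, rfl⟩ := h1; obtain ⟨rfl, -⟩ := h2; omega
    · obtain ⟨rfl, rfl⟩ := h1; omega
    · obtain ⟨rfl, rfl⟩ := h2; omega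
    · omega

lemma push_exc {g : W → W → ℤ} {x y : W} (hxy : x ≠ y) (v : W) :
    exc (push g x y) v = exc g v + (if v = x then 1 else 0) - (if v = y then 1 else 0) := by
  simp only [exc, push, Finset.sum_sub_distrib, Finset.sum_add_distrib, ite_and]
  by_cases hvx : v = x
  · subst hvx
    simp [Finset.sum_ite_eq', Ne.symm hxy, hxy]
  · by_cases hvy : v = y
    · subst hvy
      simp [Finset.sum_ite_eq', hvx]
    · simp [hvx, hvy]

lemma augment (hdiag : ∀ x, ν x x = 0) (b : W) :
    ∀ n (g : W → W → ℤ), Feas ν g → ∀ x, stepN (res ν g) n x b →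
    ∃ g', Feas ν g' ∧ ∀ v, exc g' v =
      exc g v + (if v = x then 1 else 0) - (if v = b then 1 else 0) := by
  intro n
  induction n using Nat.strong_induction_on with
  | _ n ih =>
    intro g hg x hpath
    classical
    have hex : ∃ m, stepN (res ν g) m x b := ⟨n, hpath⟩
    obtain ⟨m, hspec, hmin⟩ : ∃ m, stepN (res ν g) m x b ∧
        ∀ j, j < m → ¬ stepN (res ν g) j x b :=
      ⟨Nat.find hex, Nat.find_spec hex, fun j hj => Nat.find_min hex hj⟩
    have hmn : m ≤ n := not_lt.1 fun h => hmin n h hpath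
    match m, hspec, hmin, hmn with
    | 0, hspec, hmin, hmn =>
      have hxb : x = b := hspec
      subst hxb
      exact ⟨g, hg, fun v => by ring⟩
    | m' + 1, hspec, hmin, hmn =>
      obtain ⟨y, hxy, hyb⟩ := hspec
      have hgd : g x x = 0 := by have := hg.1 x x; omega
      have hxny : x ≠ y := by
        rintro rfl
        have : g x x < (ν x x : ℤ) := hxy
        rw [hdiag x] at this; omega
      set g₁ := push g x y with hg1def
      have hg₁ : Feas ν g₁ := push_feas ν hg hxy
      have shift : ∀ j, j < m' + 1 → ∀ z, stepN (res ν g) j z b → stepN (res ν g₁) j z b := by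
        intro j
        induction j with
        | zero => intro _ z h; exact h
        | succ j ihj =>
          rintro hj z ⟨w, hzw, hwb⟩
          refine ⟨w, ?_, ihj (by omega) w hwb⟩
          have hne : ¬(z = x ∧ w = y) := by
            rintro ⟨rfl, rfl⟩
            exact hmin (j+1) hj ⟨w, hzw, hwb⟩
          have hle : g₁ z w ≤ g z w := by
            simp only [hg1def, push, if_neg hne]
            split_ifs <;> omega
          have hzw' : g z w < (ν z w : ℤ) := hzw
          exact lt_of_le_of_lt hle hzw'
      have hyb₁ : stepN (res ν g₁) m' y b := shift m' (by omega) y hyb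
      obtain ⟨g', hg', he⟩ := ih m' (by omega) g₁ hg₁ y hyb₁
      refine ⟨g', hg', fun v => ?_⟩
      rw [he v, hg1def, push_exc hxny v]
      ring

lemma skew_sum_zero {g : W → W → ℤ} (hsk : ∀ x y, g x y = - g y x) (A : Finset W) :
    ∑ x ∈ A, ∑ y ∈ A, g x y = 0 := by
  have h : ∑ x ∈ A, ∑ y ∈ A, g x y = ∑ y ∈ A, ∑ x ∈ A, g x y := Finset.sum_comm
  have h2 : ∑ y ∈ A, ∑ x ∈ A, g x y = - ∑ y ∈ A, ∑ x ∈ A, g y x := by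
    rw [← Finset.sum_neg_distrib]
    refine Finset.sum_congr rfl fun y _ => ?_
    rw [← Finset.sum_neg_distrib]
    exact Finset.sum_congr rfl fun x _ => hsk x y
  have h3 : ∑ y ∈ A, ∑ x ∈ A, g y x = ∑ x ∈ A, ∑ y ∈ A, g x y := rfl
  rw [h3] at h2
  linarith [h.trans h2]

lemma mfmc (hsym : ∀ x y, ν x y = ν y x) (hdiag : ∀ x, ν x x = 0)
    (a b : W) (hab : a ≠ b) (k : ℕ) :
    (∃ g, Feas ν g ∧ ∀ v, exc g v = if v = a then (k:ℤ) else if v = b then -(k:ℤ) else 0) ∨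
    (∃ c, IsCutFn ν a b c ∧ ((∑ x, ∑ y, c x y : ℕ) : ℤ) < 2 * k) := by
  classical
  induction k with
  | zero =>
    left
    refine ⟨fun _ _ => 0, ⟨fun x y => by ring, fun x y => by positivity⟩, fun v => ?_⟩
    simp [exc]
  | succ k ihk =>
    rcases ihk with ⟨g, hg, hv⟩ | ⟨c, hc, hlt⟩
    · by_cases hres : Relation.ReflTransGen (res ν g) a b
      · obtain ⟨n, hn⟩ := (reflTransGen_iff_stepN _ _ _).1 hres
        obtain ⟨g', hg', he⟩ := augment ν hdiag b n g hg a hn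
        left
        refine ⟨g', hg', fun v => ?_⟩
        rw [he v, hv v]
        by_cases hva : v = a
        · have hvb : v ≠ b := fun h => hab (hva ▸ h)
          simp only [hva, if_true, if_neg hvb, if_neg hab, eq_self_iff_true]
          push_cast; ring
        · by_cases hvb : v = b
          · simp only [hvb, if_true, if_neg hva, if_neg (Ne.symm hab), eq_self_iff_true]
            push_cast; ring
          · simp only [if_neg hva, if_neg hvb]
            ring
      · right
        set S : W → Prop := fun v => Relation.ReflTransGen (res ν g) a v with hS
        have hSa : S a := Relation.ReflTransGen.refl
        have hSb : ¬ S b := hres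
        have hsat : ∀ x y, S x → ¬ S y → g x y = (ν x y : ℤ) := by
          intro x y hx hy
          have h1 : ¬ res ν g x y := fun h => hy (hx.tail h)
          have h2 := hg.2 x y
          simp only [res, not_lt] at h1
          omega
        set c : W → W → ℕ := fun x y => if (S x ∧ ¬ S y) ∨ (¬ S x ∧ S y) then ν x y else 0
          with hcdef
        have hcut : IsCutFn ν a b c := by
          refine ⟨fun x y => ?_, fun x y => ?_, ?_⟩
          · simp only [hcdef]
            by_cases h : (S x ∧ ¬ S y) ∨ (¬ S x ∧ S y)
            · rw [if_pos h, if_pos (by tauto), hsym]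
            · rw [if_neg h, if_neg (by tauto)]
          · simp only [hcdef]; split_ifs <;> omega
          · intro h
            apply hSb
            have hall : ∀ z, Relation.ReflTransGen (fun x y => c x y < ν x y) a z → S z := by
              intro z hz
              induction hz with
              | refl => exact hSa
              | @tail p q _ hstep ihz =>
                by_contra hzn
                have hceq : c p q = ν p q := by
                  simp only [hcdef]; rw [if_pos (Or.inl ⟨ihz, hzn⟩)]
                omega
            exact hall b h
        refine ⟨c, hcut, ?_⟩
        -- size computation
        set A : Finset W := Finset.univ.filter S with hA
        set B : Finset W := Finset.univ.filter (fun v => ¬ S v) with hB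
        have hmemA : ∀ x, x ∈ A ↔ S x := by intro x; simp [hA]
        have hmemB : ∀ x, x ∈ B ↔ ¬ S x := by intro x; simp [hB]
        have hsplit : ∀ f : W → ℤ, ∑ y, f y = ∑ y ∈ A, f y + ∑ y ∈ B, f y := by
          intro f; rw [hA, hB]
          exact (Finset.sum_filter_add_sum_filter_not Finset.univ S f).symm
        have h1 : ∑ x ∈ A, exc g x = (k:ℤ) := by
          rw [Finset.sum_congr rfl (fun x _ => hv x)]
          rw [Finset.sum_eq_single a]
          · rw [if_pos rfl]
          · intro x hx hxa
            rw [if_neg hxa, if_neg (by rintro rfl; exact hSb ((hmemA x).1 hx))]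
          · intro ha
            exact absurd ((hmemA a).2 hSa) ha
        have hkey : ∑ x ∈ A, ∑ y ∈ B, g x y = (k:ℤ) := by
          have h3 : ∑ x ∈ A, exc g x
              = ∑ x ∈ A, ∑ y ∈ A, g x y + ∑ x ∈ A, ∑ y ∈ B, g x y := by
            rw [← Finset.sum_add_distrib]
            exact Finset.sum_congr rfl fun x _ => hsplit (g x)
          have h4 := skew_sum_zero hg.1 A
          rw [h3, h4, zero_add] at h1
          exact h1
        have hcAB : ∑ x ∈ A, ∑ y ∈ B, (c x y : ℤ) = (k:ℤ) := by
          rw [← hkey]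
          refine Finset.sum_congr rfl fun x hx => Finset.sum_congr rfl fun y hy => ?_
          have hx' := (hmemA x).1 hx
          have hy' := (hmemB y).1 hy
          rw [hsat x y hx' hy']
          simp only [hcdef]
          rw [if_pos (Or.inl ⟨hx', hy'⟩)]
        have hcBA : ∑ x ∈ B, ∑ y ∈ A, (c x y : ℤ) = (k:ℤ) := by
          rw [Finset.sum_comm, ← hcAB]
          refine Finset.sum_congr rfl fun x hx => Finset.sum_congr rfl fun y hy => ?_
          rw [hcut.1 y x]
        have hcAA : ∑ x ∈ A, ∑ y ∈ A, (c x y : ℤ) = 0 := by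
          refine Finset.sum_eq_zero fun x hx => Finset.sum_eq_zero fun y hy => ?_
          have hx' := (hmemA x).1 hx
          have hy' := (hmemA y).1 hy
          simp only [hcdef]
          rw [if_neg (by tauto)]
          simp
        have hcBB : ∑ x ∈ B, ∑ y ∈ B, (c x y : ℤ) = 0 := by
          refine Finset.sum_eq_zero fun x hx => Finset.sum_eq_zero fun y hy => ?_
          have hx' := (hmemB x).1 hx
          have hy' := (hmemB y).1 hy
          simp only [hcdef]
          rw [if_neg (by tauto)]
          simp
        have htotal : ((∑ x, ∑ y, c x y : ℕ) : ℤ) = 2 * k := by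
          push_cast
          rw [hsplit (fun x => ∑ y, (c x y : ℤ))]
          have hinner : ∀ x : W, ∑ y, (c x y : ℤ) = ∑ y ∈ A, (c x y : ℤ) + ∑ y ∈ B, (c x y : ℤ) :=
            fun x => hsplit _
          rw [Finset.sum_congr rfl (fun x _ => hinner x),
              Finset.sum_congr rfl (fun x (_ : x ∈ B) => hinner x)]
          rw [Finset.sum_add_distrib, Finset.sum_add_distrib]
          rw [hcAA, hcAB, hcBA, hcBB]
          ring
        rw [htotal]
        push_cast
        linarith
    · right
      refine ⟨c, hc, ?_⟩
      push_cast at hlt ⊢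
      linarith

lemma weak_duality (a b : W) (hab : a ≠ b) (g : W → W → ℤ) (hg : Feas ν g) (k : ℤ)
    (hv : ∀ v, exc g v = if v = a then k else if v = b then -k else 0)
    (c : W → W → ℕ) (hc : IsCutFn ν a b c) :
    2 * k ≤ ((∑ x, ∑ y, c x y : ℕ) : ℤ) := by
  classical
  set S : W → Prop := fun v => Relation.ReflTransGen (fun x y => c x y < ν x y) a v with hS
  have hSa : S a := Relation.ReflTransGen.refl
  have hSb : ¬ S b := hc.2.2
  have hsat : ∀ x y, S x → ¬ S y → (c x y : ℤ) = (ν x y : ℤ) := by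
    intro x y hx hy
    have h1 : ¬ (c x y < ν x y) := fun h => hy (hx.tail h)
    have h2 := hc.2.1 x y
    omega
  set A : Finset W := Finset.univ.filter S with hA
  set B : Finset W := Finset.univ.filter (fun v => ¬ S v) with hB
  have hmemA : ∀ x, x ∈ A ↔ S x := by intro x; simp [hA]
  have hmemB : ∀ x, x ∈ B ↔ ¬ S x := by intro x; simp [hB]
  have hsplit : ∀ f : W → ℤ, ∑ y, f y = ∑ y ∈ A, f y + ∑ y ∈ B, f y := by
    intro f; rw [hA, hB]
    exact (Finset.sum_filter_add_sum_filter_not Finset.univ S f).symm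
  have h1 : ∑ x ∈ A, exc g x = k := by
    rw [Finset.sum_congr rfl (fun x _ => hv x)]
    rw [Finset.sum_eq_single a]
    · rw [if_pos rfl]
    · intro x hx hxa
      rw [if_neg hxa, if_neg (by rintro rfl; exact hSb ((hmemA x).1 hx))]
    · intro ha
      exact absurd ((hmemA a).2 hSa) ha
  have hkey : ∑ x ∈ A, ∑ y ∈ B, g x y = k := by
    have h3 : ∑ x ∈ A, exc g x
        = ∑ x ∈ A, ∑ y ∈ A, g x y + ∑ x ∈ A, ∑ y ∈ B, g x y := by
      rw [← Finset.sum_add_distrib]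
      exact Finset.sum_congr rfl fun x _ => hsplit (g x)
    have h4 := skew_sum_zero hg.1 A
    rw [h3, h4, zero_add] at h1
    exact h1
  have hle1 : k ≤ ∑ x ∈ A, ∑ y ∈ B, (c x y : ℤ) := by
    rw [← hkey]
    refine Finset.sum_le_sum fun x hx => Finset.sum_le_sum fun y hy => ?_
    rw [hsat x y ((hmemA x).1 hx) ((hmemB y).1 hy)]
    exact hg.2 x y
  have hle2 : k ≤ ∑ x ∈ B, ∑ y ∈ A, (c x y : ℤ) := by
    calc k ≤ ∑ x ∈ A, ∑ y ∈ B, (c x y : ℤ) := hle1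
    _ = ∑ x ∈ B, ∑ y ∈ A, (c x y : ℤ) := by
        rw [Finset.sum_comm]
        refine Finset.sum_congr rfl fun x _ => Finset.sum_congr rfl fun y _ => ?_
        rw [hc.1 y x]
  have hnn1 : (0:ℤ) ≤ ∑ x ∈ A, ∑ y ∈ A, (c x y : ℤ) := by positivity
  have hnn2 : (0:ℤ) ≤ ∑ x ∈ B, ∑ y ∈ B, (c x y : ℤ) := by positivity
  have htotal : ((∑ x, ∑ y, c x y : ℕ) : ℤ)
      = ∑ x ∈ A, ∑ y ∈ A, (c x y : ℤ) + ∑ x ∈ A, ∑ y ∈ B, (c x y : ℤ)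
      + (∑ x ∈ B, ∑ y ∈ A, (c x y : ℤ) + ∑ x ∈ B, ∑ y ∈ B, (c x y : ℤ)) := by
    push_cast
    rw [hsplit (fun x => ∑ y, (c x y : ℤ))]
    have hinner : ∀ x : W, ∑ y, (c x y : ℤ) = ∑ y ∈ A, (c x y : ℤ) + ∑ y ∈ B, (c x y : ℤ) :=
      fun x => hsplit _
    rw [Finset.sum_congr rfl (fun x _ => hinner x),
        Finset.sum_congr rfl (fun x (_ : x ∈ B) => hinner x)]
    rw [Finset.sum_add_distrib, Finset.sum_add_distrib]
  rw [htotal]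
  linarith

lemma exists_minimal_cut {ν : W → W → ℕ} {a b : W} :
    ∀ N (c : W → W → ℕ), (∑ x, ∑ y, c x y) ≤ N → IsCutFn ν a b c →
    ∃ c', (IsCutFn ν a b c' ∧
      ∀ c'' : W → W → ℕ, (∀ x y, c'' x y ≤ c' x y) → IsCutFn ν a b c'' → c'' = c') ∧
      ∀ x y, c' x y ≤ c x y := by
  intro N
  induction N using Nat.strong_induction_on with
  | _ N ih =>
    intro c hN hc
    by_cases hmin : ∀ c'' : W → W → ℕ, (∀ x y, c'' x y ≤ c x y) → IsCutFn ν a b c'' → c'' = c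
    · exact ⟨c, ⟨hc, hmin⟩, fun x y => le_refl _⟩
    · push_neg at hmin
      obtain ⟨c', hle, hc', hne⟩ := hmin
      have hstrict : ∑ x, ∑ y, c' x y < ∑ x, ∑ y, c x y := by
        have hx : ∃ x y, c' x y < c x y := by
          by_contra hcon
          push_neg at hcon
          apply hne
          funext x y
          exact le_antisymm (hle x y) (hcon x y)
        obtain ⟨x0, y0, hxy0⟩ := hx
        refine Finset.sum_lt_sum (fun x _ => Finset.sum_le_sum fun y _ => hle x y) ?_
        refine ⟨x0, Finset.mem_univ x0, ?_⟩
        exact Finset.sum_lt_sum (fun y _ => hle x0 y) ⟨y0, Finset.mem_univ y0, hxy0⟩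
      have hlt : ∑ x, ∑ y, c' x y < N + 1 := by omega
      obtain ⟨c'', hmin'', hle''⟩ := ih (∑ x, ∑ y, c' x y) (by omega) c' (le_refl _) hc'
      exact ⟨c'', hmin'', fun x y => le_trans (hle'' x y) (hle x y)⟩

end Flow
section Main

variable {V : Type*} [Fintype V] [DecidableEq V]

/-- The flow on `H*` induced by a `t`-road. -/
def roadFlow (μT : V → V → ℕ) (t : V → ℤ) : (V ⊕ Bool) → (V ⊕ Bool) → ℤ
  | Sum.inl u, Sum.inl v => (μT u v : ℤ) - (μT v u : ℤ)
  | Sum.inl u, Sum.inr c => if c then -((t u).toNat : ℤ) else ((-t u).toNat : ℤ)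
  | Sum.inr c, Sum.inl v => if c then ((t v).toNat : ℤ) else -(((-t v).toNat : ℤ))
  | Sum.inr _, Sum.inr _ => 0

theorem tRoad_aux (μH : V → V → ℕ)
    (hsymm : ∀ u v : V, μH u v = μH v u) (hirrefl : ∀ v : V, μH v v = 0)
    (t : V → ℤ) (ht : ∑ v, t v = 0) :
    (∃ μT : V → V → ℕ, IsTRoad μH t μT) ↔ ¬ HasSmallTCut μH t := by
  classical
  set a : V ⊕ Bool := Sum.inr true with ha
  set b : V ⊕ Bool := Sum.inr false with hb
  have hab : a ≠ b := by simp [ha, hb]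
  set ν : (V ⊕ Bool) → (V ⊕ Bool) → ℕ := auxGraph μH t with hν
  have hνsym : ∀ x y : V ⊕ Bool, ν x y = ν y x := by
    rintro (x | x) (y | y) <;> simp [hν, auxGraph, hsymm]
  have hνdiag : ∀ x : V ⊕ Bool, ν x x = 0 := by
    rintro (x | x) <;> simp [hν, auxGraph, hirrefl]
  set P : ℕ := ∑ v, (t v).toNat with hP
  have hPp : (P : ℤ) = ∑ v ∈ Finset.univ.filter (fun v => 0 < t v), t v := by
    rw [Finset.sum_filter, hP]
    push_cast
    refine Finset.sum_congr rfl fun v _ => ?_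
    by_cases h : 0 < t v
    · rw [if_pos h, Int.toNat_of_nonneg h.le]
    · rw [if_neg h]
      have : t v ≤ 0 := not_lt.1 h
      omega
  have hQP : ∑ v, ((-t v).toNat : ℤ) = (P : ℤ) := by
    have hs : ∑ v, (((t v).toNat : ℤ) - ((-t v).toNat : ℤ)) = ∑ v, t v :=
      Finset.sum_congr rfl fun v _ => by omega
    rw [ht, Finset.sum_sub_distrib] at hs
    rw [hP]
    push_cast
    linarith
  -- capacities at a and b
  have hνa : ∀ v : V, ν a (Sum.inl v) = (t v).toNat := by intro v; simp [hν, ha, auxGraph]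
  have hνb : ∀ v : V, ν b (Sum.inl v) = (-t v).toNat := by intro v; simp [hν, hb, auxGraph]
  have hνrr : ∀ c c' : Bool, ν (Sum.inr c) (Sum.inr c') = 0 := by
    intro c c'; simp [hν, auxGraph]
  have hνll : ∀ u v : V, ν (Sum.inl u) (Sum.inl v) = μH u v := by
    intro u v; simp [hν, auxGraph]
  have hsumA : ∑ u, ν a u = P := by
    rw [Fintype.sum_sum_type, Fintype.sum_bool, hP]
    have e1 : ν a (Sum.inr true) = 0 := by rw [ha]; exact hνrr true true
    have e2 : ν a (Sum.inr false) = 0 := by rw [ha]; exact hνrr true false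
    rw [e1, e2]
    simp [hνa]
  have hsumB : ∑ u, ν b u = ∑ v : V, (-t v).toNat := by
    rw [Fintype.sum_sum_type, Fintype.sum_bool]
    have e1 : ν b (Sum.inr true) = 0 := by rw [hb]; exact hνrr false true
    have e2 : ν b (Sum.inr false) = 0 := by rw [hb]; exact hνrr false false
    rw [e1, e2]
    simp [hνb]
  constructor
  · rintro ⟨μT, hT1, hT2⟩ ⟨c, ⟨hcut, -⟩, hsize⟩
    set g : (V ⊕ Bool) → (V ⊕ Bool) → ℤ := roadFlow μT t with hgdef
    have hfeas : Feas ν g := by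
      constructor
      · rintro (u | u) (v | v) <;> simp only [hgdef, roadFlow] <;>
          [skip; skip; skip; skip]
        · ring
        · cases v <;> simp
        · cases u <;> simp
        · ring
      · rintro (u | u) (v | v)
        · have h := hT1 u v
          simp only [hgdef, roadFlow, hνll]
          omega
        · cases v <;> simp [hgdef, roadFlow, hν, auxGraph] <;> omega
        · cases u <;> simp [hgdef, roadFlow, hν, auxGraph]
        · simp [hgdef, roadFlow, hνrr]
    have hexc : ∀ v, exc g v = if v = a then (P : ℤ) else if v = b then -(P : ℤ) else 0 := by
      rintro (v | v)
      · rw [if_neg (show (Sum.inl v : V ⊕ Bool) ≠ a by simp [ha]),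
            if_neg (show (Sum.inl v : V ⊕ Bool) ≠ b by simp [hb])]
        rw [exc, Fintype.sum_sum_type, Fintype.sum_bool]
        have h1 : ∑ u : V, g (Sum.inl v) (Sum.inl u) = t v := by
          have h2 := hT2 v
          rw [outDeg, inDeg] at h2
          push_cast at h2
          rw [← Finset.sum_sub_distrib] at h2
          simpa [hgdef, roadFlow] using h2
        have hgt : g (Sum.inl v) (Sum.inr true) = -((t v).toNat : ℤ) := by
          simp [hgdef, roadFlow]
        have hgf : g (Sum.inl v) (Sum.inr false) = ((-t v).toNat : ℤ) := by
          simp [hgdef, roadFlow]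
        rw [hgt, hgf, h1]
        omega
      · cases v with
        | false =>
          rw [if_neg (show (Sum.inr false : V ⊕ Bool) ≠ a by simp [ha]), if_pos hb.symm]
          rw [exc, Fintype.sum_sum_type, Fintype.sum_bool]
          have h0 : ∀ u : V, g (Sum.inr false) (Sum.inl u) = -(((-t u).toNat : ℤ)) :=
            fun u => by simp [hgdef, roadFlow]
          have h1 : g (Sum.inr false) (Sum.inr true) = 0 := by simp [hgdef, roadFlow]
          have h2 : g (Sum.inr false) (Sum.inr false) = 0 := by simp [hgdef, roadFlow]
          rw [Finset.sum_congr rfl (fun u _ => h0 u), h1, h2]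
          rw [Finset.sum_neg_distrib, hQP]
          ring
        | true =>
          rw [if_pos ha.symm]
          rw [exc, Fintype.sum_sum_type, Fintype.sum_bool]
          have h0 : ∀ u : V, g (Sum.inr true) (Sum.inl u) = ((t u).toNat : ℤ) :=
            fun u => by simp [hgdef, roadFlow]
          have h1 : g (Sum.inr true) (Sum.inr true) = 0 := by simp [hgdef, roadFlow]
          have h2 : g (Sum.inr true) (Sum.inr false) = 0 := by simp [hgdef, roadFlow]
          rw [Finset.sum_congr rfl (fun u _ => h0 u), h1, h2]
          rw [hP]
          push_cast
          ring
    have hwd := weak_duality ν a b hab g hfeas (P : ℤ) hexc c hcut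
    rw [hPp] at hwd
    exact absurd hsize (not_lt.2 hwd)
  · intro hno
    by_contra hroad
    apply hno
    rcases mfmc ν hνsym hνdiag a b hab P with ⟨g, hg, hv⟩ | ⟨c, hc, hlt⟩
    · exfalso; apply hroad
      -- saturation at a
      have hsatA : ∀ u, g a u = (ν a u : ℤ) := by
        have hle : ∀ u ∈ Finset.univ, g a u ≤ (ν a u : ℤ) := fun u _ => hg.2 a u
        have hsum : ∑ u, g a u = ∑ u, (ν a u : ℤ) := by
          have h1 : ∑ u, g a u = (P : ℤ) := by
            have h2 := hv a
            rw [if_pos rfl] at h2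
            exact h2
          have h2 : ∑ u, (ν a u : ℤ) = (P : ℤ) := by
            rw [show ∑ u, ((ν a u : ℤ)) = ((∑ u, ν a u : ℕ) : ℤ) by push_cast; rfl, hsumA]
          rw [h1, h2]
        intro u
        exact (Finset.sum_eq_sum_iff_of_le hle).1 hsum u (Finset.mem_univ u)
      have hsatB : ∀ u, g b u = -(ν b u : ℤ) := by
        have hle : ∀ u ∈ Finset.univ, - g b u ≤ (ν b u : ℤ) := by
          intro u _
          have h := hg.2 u b
          have hs := hg.1 u b
          have hss := hνsym u b
          omega
        have hsum : ∑ u, - g b u = ∑ u, (ν b u : ℤ) := by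
          have h1 : ∑ u, - g b u = (P : ℤ) := by
            have h2 := hv b
            rw [if_neg (Ne.symm hab), if_pos rfl] at h2
            rw [Finset.sum_neg_distrib]
            rw [exc] at h2
            omega
          have h2 : ∑ u, (ν b u : ℤ) = (P : ℤ) := by
            rw [show ∑ u, ((ν b u : ℤ)) = ((∑ u, ν b u : ℕ) : ℤ) by push_cast; rfl, hsumB]
            exact_mod_cast hQP
          rw [h1, h2]
        intro u
        have h3 := (Finset.sum_eq_sum_iff_of_le hle).1 hsum u (Finset.mem_univ u)
        omega
      set μT : V → V → ℕ := fun u v => (g (Sum.inl u) (Sum.inl v)).toNat with hμT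
      refine ⟨μT, fun u v => ?_, fun v => ?_⟩
      · have h1 := hg.2 (Sum.inl u) (Sum.inl v)
        have h2 := hg.2 (Sum.inl v) (Sum.inl u)
        have hs := hg.1 (Sum.inl u) (Sum.inl v)
        rw [hνll] at h1
        rw [hνll, hsymm v u] at h2
        have e1 : μT u v = (g (Sum.inl u) (Sum.inl v)).toNat := rfl
        have e2 : μT v u = (g (Sum.inl v) (Sum.inl u)).toNat := rfl
        omega
      · have hz := hv (Sum.inl v)
        rw [if_neg (show (Sum.inl v : V ⊕ Bool) ≠ a by simp [ha]),
            if_neg (show (Sum.inl v : V ⊕ Bool) ≠ b by simp [hb])] at hz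
        rw [exc, Fintype.sum_sum_type, Fintype.sum_bool] at hz
        have hga : g (Sum.inl v) (Sum.inr true) = -((t v).toNat : ℤ) := by
          have h1 := hsatA (Sum.inl v)
          have hs := hg.1 a (Sum.inl v)
          rw [hνa] at h1
          rw [ha] at h1 hs
          omega
        have hgb : g (Sum.inl v) (Sum.inr false) = ((-t v).toNat : ℤ) := by
          have h1 := hsatB (Sum.inl v)
          have hs := hg.1 b (Sum.inl v)
          rw [hνb] at h1
          rw [hb] at h1 hs
          omega
        rw [hga, hgb] at hz
        have hkey : ∑ u : V, g (Sum.inl v) (Sum.inl u) = t v := by omega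
        rw [outDeg, inDeg]
        push_cast
        rw [← Finset.sum_sub_distrib, ← hkey]
        refine Finset.sum_congr rfl fun u _ => ?_
        have hs := hg.1 (Sum.inl u) (Sum.inl v)
        have e1 : μT v u = (g (Sum.inl v) (Sum.inl u)).toNat := rfl
        have e2 : μT u v = (g (Sum.inl u) (Sum.inl v)).toNat := rfl
        omega
    · obtain ⟨c', hmin, hle⟩ := exists_minimal_cut (∑ x, ∑ y, c x y) c (le_refl _) hc
      refine ⟨c', hmin, ?_⟩
      rw [← hPp]
      have hmono : ∑ x, ∑ y, c' x y ≤ ∑ x, ∑ y, c x y :=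
        Finset.sum_le_sum fun x _ => Finset.sum_le_sum fun y _ => hle x y
      push_cast at hlt ⊢
      push_cast at hmono
      linarith

end Main

theorem tRoad_iff_no_smallTCut (μH : V → V → ℕ)
    (hsymm : ∀ u v : V, μH u v = μH v u) (hirrefl : ∀ v : V, μH v v = 0)
    (t : V → ℤ) (ht : ∑ v, t v = 0) :
    (∃ μT : V → V → ℕ, IsTRoad μH t μT) ↔ ¬ HasSmallTCut μH t :=
  tRoad_aux μH hsymm hirrefl t ht

end Stmt4
end

section
/- Let G = (V,E) be a simple graph and a, b distinct vertices of G. Let G* be the subdivision of G. If F is a minimal (a,b)-cut of G, then the set {v_f : f ∈ F} of subdivision vertices corresponding to the edges of F is a minimal (a,b)-separator of G*. -/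
/-!
Statement 7: Let `G = (V,E)` be a simple graph and `a, b` distinct vertices of `G`.  Let
`G*` be the subdivision of `G`.  If `F` is a minimal `(a,b)`-cut of `G`, then the set
`{v_f : f ∈ F}` of subdivision vertices corresponding to the edges of `F` is a minimal
`(a,b)`-separator of `G*`.
-/

namespace Stmt7

variable {V : Type*} [Fintype V] [DecidableEq V]

/-- The subdivision `G*` of a simple graph `G`: each edge `f = uw` is replaced by a new
vertex `v_f` adjacent precisely to `u` and `w`; no two original vertices are adjacent. -/
def subdiv (G : SimpleGraph V) : SimpleGraph (V ⊕ G.edgeSet) where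
  Adj x y :=
    match x, y with
    | Sum.inl u, Sum.inr f => u ∈ (f : Sym2 V)
    | Sum.inr f, Sum.inl u => u ∈ (f : Sym2 V)
    | _, _ => False
  symm := ⟨by rintro (u | f) (v | g) h <;> exact h⟩
  loopless := ⟨by rintro (u | f) h <;> exact h⟩

/-- `F` is an `(a,b)`-cut of `G`: a set of edges of `G` such that `a` and `b` lie in
different connected components after deleting the edges of `F`. -/
def IsCutSet {W : Type*} (G : SimpleGraph W) (a b : W) (F : Set (Sym2 W)) : Prop :=
  F ⊆ G.edgeSet ∧
  ¬ Relation.ReflTransGen (fun x y => G.Adj x y ∧ s(x, y) ∉ F) a b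

/-- `F` is a minimal `(a,b)`-cut of `G`: no proper subset of `F` is an `(a,b)`-cut. -/
def IsMinimalCutSet {W : Type*} (G : SimpleGraph W) (a b : W) (F : Set (Sym2 W)) : Prop :=
  IsCutSet G a b F ∧ ∀ F' ⊆ F, IsCutSet G a b F' → F' = F

/-- `S` is an `(a,b)`-separator of `G`: a set of vertices disjoint from `{a,b}` such that
`a` and `b` lie in different connected components after deleting the vertices of `S`. -/
def IsSeparator {W : Type*} (G : SimpleGraph W) (a b : W) (S : Set W) : Prop :=
  a ∉ S ∧ b ∉ S ∧
  ¬ Relation.ReflTransGen (fun x y => G.Adj x y ∧ x ∉ S ∧ y ∉ S) a b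

/-- `S` is a minimal `(a,b)`-separator of `G`. -/
def IsMinimalSeparator {W : Type*} (G : SimpleGraph W) (a b : W) (S : Set W) : Prop :=
  IsSeparator G a b S ∧ ∀ S' ⊆ S, IsSeparator G a b S' → S' = S


lemma lift (G : SimpleGraph V) (F' : Set (Sym2 V)) (S' : Set (V ⊕ G.edgeSet))
    (hS' : ∀ f : G.edgeSet, Sum.inr f ∈ S' → (f : Sym2 V) ∈ F')
    (hV : ∀ x : V, (Sum.inl x : V ⊕ G.edgeSet) ∉ S') {a b : V}
    (h : Relation.ReflTransGen (fun x y => G.Adj x y ∧ s(x, y) ∉ F') a b) :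
    Relation.ReflTransGen (fun x y => (subdiv G).Adj x y ∧ x ∉ S' ∧ y ∉ S')
      (Sum.inl a) (Sum.inl b) := by
  induction h with
  | refl => exact .refl
  | @tail c d _hprev hstep ih =>
    obtain ⟨hadj, hnot⟩ := hstep
    set f : G.edgeSet := ⟨s(c, d), hadj⟩ with hf
    have hfS : Sum.inr f ∉ S' := fun hh => hnot (hS' f hh)
    have step1 : Relation.ReflTransGen (fun x y => (subdiv G).Adj x y ∧ x ∉ S' ∧ y ∉ S')
        (Sum.inl a) (Sum.inr f) := ih.tail ⟨Sym2.mem_mk_left c d, hV c, hfS⟩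
    exact step1.tail ⟨Sym2.mem_mk_right c d, hfS, hV d⟩

lemma proj (G : SimpleGraph V) (F : Set (Sym2 V)) (hFE : F ⊆ G.edgeSet)
    (S : Set (V ⊕ G.edgeSet)) (hS : ∀ f : G.edgeSet, Sum.inr f ∈ S ↔ (f : Sym2 V) ∈ F)
    (hV : ∀ x : V, (Sum.inl x : V ⊕ G.edgeSet) ∉ S) {a : V} {z : V ⊕ G.edgeSet}
    (h : Relation.ReflTransGen (fun x y => (subdiv G).Adj x y ∧ x ∉ S ∧ y ∉ S)
      (Sum.inl a) z) :
    (∀ x : V, z = Sum.inl x → Relation.ReflTransGen (fun x y => G.Adj x y ∧ s(x, y) ∉ F) a x)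
    ∧ (∀ f : G.edgeSet, z = Sum.inr f → (f : Sym2 V) ∉ F ∧
        ∀ u, u ∈ (f : Sym2 V) → Relation.ReflTransGen (fun x y => G.Adj x y ∧ s(x, y) ∉ F) a u) := by
  induction h with
  | refl =>
    constructor
    · rintro x hx
      obtain rfl : a = x := Sum.inl.inj hx
      exact .refl
    · rintro f hf; cases hf
  | @tail w z _hprev hstep ih =>
    obtain ⟨hadj, hwS, hzS⟩ := hstep
    match w, z with
    | Sum.inl x, Sum.inl y => exact absurd hadj (by simp [subdiv])
    | Sum.inr f, Sum.inr g => exact absurd hadj (by simp [subdiv])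
    | Sum.inl x, Sum.inr g =>
      have hx : x ∈ (g : Sym2 V) := hadj
      have hgF : (g : Sym2 V) ∉ F := fun hh => hzS ((hS g).2 hh)
      have hax : Relation.ReflTransGen (fun x y => G.Adj x y ∧ s(x, y) ∉ F) a x :=
        ih.1 x rfl
      refine ⟨by rintro _ ⟨⟩, ?_⟩
      rintro f hf
      obtain rfl : g = f := Sum.inr.inj hf
      refine ⟨hgF, fun u hu => ?_⟩
      by_cases hux : u = x
      · exact hux ▸ hax
      · have hfeq : (g : Sym2 V) = s(x, u) :=
          ((Sym2.mem_and_mem_iff (fun h => hux h.symm)).1 ⟨hx, hu⟩)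
        have hadjxu : G.Adj x u := by
          have := g.2; rw [hfeq] at this; exact this
        exact hax.tail ⟨hadjxu, by rw [← hfeq]; exact hgF⟩
    | Sum.inr f, Sum.inl y =>
      have hy : y ∈ (f : Sym2 V) := hadj
      refine ⟨?_, by rintro _ ⟨⟩⟩
      rintro x hx
      obtain rfl : y = x := Sum.inl.inj hx
      exact (ih.2 f rfl).2 y hy

theorem minimal_cut_gives_minimal_separator (G : SimpleGraph V) (a b : V) (hab : a ≠ b)
    (F : Set (Sym2 V)) (hF : IsMinimalCutSet G a b F) :
    IsMinimalSeparator (subdiv G) (Sum.inl a) (Sum.inl b)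
      (Sum.inr '' {f : G.edgeSet | (f : Sym2 V) ∈ F}) := by
  obtain ⟨⟨hFE, hFcut⟩, hFmin⟩ := hF
  set S : Set (V ⊕ G.edgeSet) := Sum.inr '' {f : G.edgeSet | (f : Sym2 V) ∈ F} with hSdef
  have hV : ∀ x : V, (Sum.inl x : V ⊕ G.edgeSet) ∉ S := by
    rintro x ⟨f, _, hf⟩; cases hf
  have hS : ∀ f : G.edgeSet, Sum.inr f ∈ S ↔ (f : Sym2 V) ∈ F := by
    intro f
    constructor
    · rintro ⟨g, hg, hgf⟩; obtain rfl : g = f := Sum.inr.inj hgf; exact hg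
    · intro hf; exact ⟨f, hf, rfl⟩
  constructor
  · refine ⟨hV a, hV b, fun h => hFcut ?_⟩
    exact (proj G F hFE S hS hV h).1 b rfl
  · intro S' hS'S hsep
    obtain ⟨_, _, hsep'⟩ := hsep
    set F' : Set (Sym2 V) := {e | ∃ hf : e ∈ G.edgeSet, Sum.inr (⟨e, hf⟩ : G.edgeSet) ∈ S'}
      with hF'def
    have hF'F : F' ⊆ F := by
      rintro e ⟨he, hmem⟩
      exact (hS ⟨e, he⟩).1 (hS'S hmem)
    have hcut : IsCutSet G a b F' := by
      refine ⟨fun e he => hFE (hF'F he), fun h => hsep' ?_⟩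
      refine lift G F' S' (fun f hf => ⟨f.2, by simpa using hf⟩) (fun x hx => ?_) h
      exact hV x (hS'S hx)
    have hFF' : F' = F := hFmin F' hF'F hcut
    apply Set.Subset.antisymm hS'S
    rintro s ⟨f, hf, rfl⟩
    have : (f : Sym2 V) ∈ F' := hFF' ▸ hf
    obtain ⟨he, hmem⟩ := this
    simpa using hmem


end Stmt7
end
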